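/- arXiv:2502.15529 — 10 statements merged into one kernel-verified Lean document; each statement's English description precedes it below -/
import Mathlib

section
/- Let φ : ℝⁿ → ℝ be σ-strongly convex with σ > 0. Let x, z, x̂ ∈ ℝⁿ, let x* be a subgradient of φ at x, and let z* be a subgradient of φ at z. Then D_φ^{z*}(z, x̂) ≤ D_φ^{x*}(x, x̂) + ⟨z* − x*, x − x̂⟩ + (1/(2σ))·‖z* − x*‖². -/
open Finset RealInnerProductSpace

/-- For a `σ`-strongly convex `φ : ℝⁿ → ℝ`, subgradients `xs` of `φ` at `x`
and `zs` of `φ` at `z`, and any `xhat`,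
`D_φ^{zs}(z, xhat) ≤ D_φ^{xs}(x, xhat) + ⟪zs − xs, x − xhat⟫ + (1/(2σ))‖zs − xs‖²`. -/
theorem stmt_4 {n : ℕ} (φ : EuclideanSpace ℝ (Fin n) → ℝ) (σ : ℝ) (hσ : 0 < σ)
    (hsc : ∀ x y xs : EuclideanSpace ℝ (Fin n),
      (∀ w, φ w ≥ φ x + ⟪xs, w - x⟫) →
        φ y ≥ φ x + ⟪xs, y - x⟫ + σ / 2 * ‖y - x‖ ^ 2)
    (x z xhat xs zs : EuclideanSpace ℝ (Fin n))
    (hxs : ∀ w, φ w ≥ φ x + ⟪xs, w - x⟫)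
    (hzs : ∀ w, φ w ≥ φ z + ⟪zs, w - z⟫) :
    φ xhat - φ z - ⟪zs, xhat - z⟫ ≤
      (φ xhat - φ x - ⟪xs, xhat - x⟫) + ⟪zs - xs, x - xhat⟫
        + 1 / (2 * σ) * ‖zs - xs‖ ^ 2 := by
  have h1 := hsc x z xs hxs
  have h2 : ⟪xs - zs, x - z⟫ ≤ ‖zs - xs‖ * ‖x - z‖ := by
    have := real_inner_le_norm (xs - zs) (x - z)
    rwa [norm_sub_rev xs zs] at this
  have h3 : ‖zs - xs‖ * ‖x - z‖ - σ / 2 * ‖x - z‖ ^ 2 ≤ 1 / (2 * σ) * ‖zs - xs‖ ^ 2 := by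
    have h := sq_nonneg (‖zs - xs‖ - σ * ‖x - z‖)
    have h0 : (0:ℝ) < 2 * σ := by linarith
    rw [show (1:ℝ)/(2*σ)*‖zs - xs‖^2 = ‖zs - xs‖^2/(2*σ) by ring, le_div_iff₀ h0]
    nlinarith [h]
  have hn : ‖z - x‖ = ‖x - z‖ := norm_sub_rev z x
  rw [hn] at h1
  simp only [inner_sub_left, inner_sub_right] at *
  linarith
end

section
/- Let φ : ℝⁿ → ℝ be σ-strongly convex (σ > 0). Let I be a finite index set, let each F_i (i ∈ I) be differentiable and satisfy the local tangential cone condition with constant η, where 0 ≤ η < 1/2, and let x̂ ∈ ℝⁿ satisfy F_i(x̂) = 0 for all i ∈ I. Let x ∈ ℝⁿ with subgradient x* of φ at x, suppose S_I(x) > 0, let α ∈ (0, 2(1−η)), set z* := x* − (ασ/S_I(x))·g_I(x), and suppose z* is a subgradient of φ at some point z. Then D_φ^{z*}(z, x̂) ≤ D_φ^{x*}(x, x̂) − ((2(1−η)α − α²)σ/2)·‖F_I(x)‖²/S_I(x). -/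
open Finset RealInnerProductSpace

set_option maxHeartbeats 1000000 in
/-- One step of the averaging block nonlinear Bregman–Kaczmarz method with
constant stepsize `α ∈ (0, 2(1−η))` satisfies
`D_φ^{zs}(z, xhat) ≤ D_φ^{xs}(x, xhat) − ((2(1−η)α − α²)σ/2)·‖F_I(x)‖²/S_I(x)`. -/
theorem stmt_8 {n : ℕ} {ι : Type*} (I : Finset ι)
    (φ : EuclideanSpace ℝ (Fin n) → ℝ) (σ : ℝ) (hσ : 0 < σ)
    (hsc : ∀ x y xs : EuclideanSpace ℝ (Fin n),
      (∀ w, φ w ≥ φ x + ⟪xs, w - x⟫) →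
        φ y ≥ φ x + ⟪xs, y - x⟫ + σ / 2 * ‖y - x‖ ^ 2)
    (F : ι → EuclideanSpace ℝ (Fin n) → ℝ)
    (F' : ι → EuclideanSpace ℝ (Fin n) → EuclideanSpace ℝ (Fin n))
    (η : ℝ) (hη0 : 0 ≤ η) (hη : η < 1 / 2)
    (hgrad : ∀ i ∈ I, ∀ x : EuclideanSpace ℝ (Fin n), HasGradientAt (F i) (F' i x) x)
    (htcc : ∀ i ∈ I, ∀ x y : EuclideanSpace ℝ (Fin n),
      abs (F i x - F i y - ⟪F' i x, x - y⟫) ≤ η * abs (F i x - F i y))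
    (xhat : EuclideanSpace ℝ (Fin n)) (hxhat : ∀ i ∈ I, F i xhat = 0)
    (x xs : EuclideanSpace ℝ (Fin n))
    (hxs : ∀ w, φ w ≥ φ x + ⟪xs, w - x⟫)
    (hS : 0 < ∑ i ∈ I, ‖F' i x‖ ^ 2)
    (α : ℝ) (hα0 : 0 < α) (hα2 : α < 2 * (1 - η))
    (z zs : EuclideanSpace ℝ (Fin n))
    (hzs : zs = xs - (α * σ / ∑ i ∈ I, ‖F' i x‖ ^ 2) • ∑ i ∈ I, F i x • F' i x)
    (hz : ∀ w, φ w ≥ φ z + ⟪zs, w - z⟫) :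
    φ xhat - φ z - ⟪zs, xhat - z⟫ ≤
      (φ xhat - φ x - ⟪xs, xhat - x⟫)
        - (2 * (1 - η) * α - α ^ 2) * σ / 2
          * ((∑ i ∈ I, F i x ^ 2) / ∑ i ∈ I, ‖F' i x‖ ^ 2) := by
  set S : ℝ := ∑ i ∈ I, ‖F' i x‖ ^ 2 with hSdef
  set R : ℝ := ∑ i ∈ I, F i x ^ 2 with hRdef
  set g : EuclideanSpace ℝ (Fin n) := ∑ i ∈ I, F i x • F' i x with hgdef
  set t : ℝ := α * σ / S with htdef
  have hS' : 0 < S := hS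
  have htpos : 0 < t := div_pos (mul_pos hα0 hσ) hS'
  have hts : t * S = α * σ := div_mul_cancel₀ _ (ne_of_gt hS')
  set Q : ℝ := R / S with hQdef
  have hQS : Q * S = R := div_mul_cancel₀ _ (ne_of_gt hS')
  -- inner products against g
  have hginner : ∀ w : EuclideanSpace ℝ (Fin n),
      ⟪g, w⟫ = ∑ i ∈ I, F i x * ⟪F' i x, w⟫ := by
    intro w
    rw [hgdef, sum_inner]
    exact Finset.sum_congr rfl fun i _ => real_inner_smul_left _ _ _
  set A : ℝ := ⟪g, x - xhat⟫ with hAdef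
  -- tangential cone condition gives (1-η) R ≤ A
  have hA : (1 - η) * R ≤ A := by
    rw [hAdef, hginner, hRdef, Finset.mul_sum]
    apply Finset.sum_le_sum
    intro i hi
    have h := htcc i hi x xhat
    rw [hxhat i hi, sub_zero] at h
    set c := F i x with hc
    set d := ⟪F' i x, x - xhat⟫ with hd
    have h1 : c * (c - d) ≤ |c| * |c - d| := by
      calc c * (c - d) ≤ |c * (c - d)| := le_abs_self _
        _ = |c| * |c - d| := abs_mul _ _
    have h2 : |c| * |c - d| ≤ |c| * (η * |c|) :=
      mul_le_mul_of_nonneg_left h (abs_nonneg c)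
    have h3 : |c| * |c| = c ^ 2 := by rw [← sq_abs c]; ring
    nlinarith [h1, h2, h3]
  -- Cauchy-Schwarz : ‖g‖² ≤ R * S
  have hgn1 : ‖g‖ ≤ ∑ i ∈ I, |F i x| * ‖F' i x‖ := by
    calc ‖g‖ ≤ ∑ i ∈ I, ‖F i x • F' i x‖ := norm_sum_le _ _
      _ = ∑ i ∈ I, |F i x| * ‖F' i x‖ :=
        Finset.sum_congr rfl fun i _ => by rw [norm_smul, Real.norm_eq_abs]
  have hgn2 : (∑ i ∈ I, |F i x| * ‖F' i x‖) ^ 2 ≤ R * S := by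
    have := Finset.sum_mul_sq_le_sq_mul_sq I (fun i => |F i x|) (fun i => ‖F' i x‖)
    simpa [sq_abs, hRdef, hSdef] using this
  have hg2 : ‖g‖ ^ 2 ≤ R * S := by
    have hnn : (0:ℝ) ≤ ∑ i ∈ I, |F i x| * ‖F' i x‖ :=
      Finset.sum_nonneg fun i _ => mul_nonneg (abs_nonneg _) (norm_nonneg _)
    nlinarith [norm_nonneg g, hgn1, hgn2]
  -- zs - xs
  have hzsx : zs - xs = -(t • g) := by rw [hzs]; abel
  have hnorm2 : ‖zs - xs‖ ^ 2 = t ^ 2 * ‖g‖ ^ 2 := by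
    rw [hzsx, norm_neg, norm_smul, mul_pow, Real.norm_eq_abs, sq_abs]
  -- smoothness-type estimate
  have hsmooth : (φ x - φ z - ⟪zs, x - z⟫) * (2 * σ) ≤ t ^ 2 * ‖g‖ ^ 2 := by
    have h := hsc x z xs hxs
    have hin : ⟪zs - xs, z - x⟫ ≤ ‖zs - xs‖ * ‖z - x‖ := real_inner_le_norm _ _
    have e1 : ⟪zs, x - z⟫ = -⟪xs, z - x⟫ - ⟪zs - xs, z - x⟫ := by
      rw [show x - z = -(z - x) by abel, inner_neg_right, inner_sub_left]; ring
    have hP0 : φ x - φ z - ⟪zs, x - z⟫ ≤ ‖zs - xs‖ * ‖z - x‖ - σ / 2 * ‖z - x‖ ^ 2 := by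
      rw [e1]; linarith [h, hin]
    have hP1 := mul_le_mul_of_nonneg_right hP0 (by linarith : (0:ℝ) ≤ 2 * σ)
    have key : (‖zs - xs‖ * ‖z - x‖ - σ / 2 * ‖z - x‖ ^ 2) * (2 * σ) ≤ ‖zs - xs‖ ^ 2 := by
      nlinarith [sq_nonneg (‖zs - xs‖ - σ * ‖z - x‖)]
    rw [← hnorm2]
    linarith [hP1, key]
  -- combine bounds
  have hP : (φ x - φ z - ⟪zs, x - z⟫) * (2 * σ) ≤ α ^ 2 * σ ^ 2 * Q := by
    have h1 : t ^ 2 * ‖g‖ ^ 2 ≤ t ^ 2 * (R * S) :=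
      mul_le_mul_of_nonneg_left hg2 (sq_nonneg t)
    have h2 : t ^ 2 * (R * S) = α ^ 2 * σ ^ 2 * Q := by
      have : t ^ 2 * (R * S) = (t * S) * (t * (Q * S)) := by rw [hQS]; ring
      rw [this, hts, show t * (Q * S) = (t * S) * Q by ring, hts]; ring
    linarith [hsmooth]
  have htR : t * R = α * σ * Q := by
    rw [← hQS, show t * (Q * S) = (t * S) * Q by ring, hts]
  have hA2 : (1 - η) * (α * σ * Q) ≤ t * A := by
    have := mul_le_mul_of_nonneg_left hA (le_of_lt htpos)
    calc (1 - η) * (α * σ * Q) = t * ((1 - η) * R) := by rw [← htR]; ring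
      _ ≤ t * A := this
  have final : (φ x - φ z - ⟪zs, x - z⟫) - t * A ≤
      -((2 * (1 - η) * α - α ^ 2) * σ / 2 * Q) := by
    nlinarith [hP, hA2, hσ]
  -- rewrite the goal
  have e2 : ⟪zs, xhat - x⟫ = ⟪xs, xhat - x⟫ - t * ⟪g, xhat - x⟫ := by
    rw [hzs, inner_sub_left, real_inner_smul_left]
  have e3 : ⟪g, xhat - x⟫ = -A := by
    rw [hAdef, show xhat - x = -(x - xhat) by abel, inner_neg_right]
  have e4 : ⟪zs, xhat - z⟫ = ⟪zs, xhat - x⟫ + ⟪zs, x - z⟫ := by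
    rw [show xhat - z = (xhat - x) + (x - z) by abel, inner_add_right]
  rw [e4, e2, e3]
  linarith [final]
end

section
/- Let φ : ℝⁿ → ℝ be σ-strongly convex (σ > 0). Let I be a finite index set of differentiable functions F_i, and let x̂ ∈ ℝⁿ satisfy F_i(x̂) = 0 for all i ∈ I. Let x ∈ ℝⁿ with subgradient x* of φ at x, suppose S_I(x) > 0, let α > 0, set z* := x* − (ασ/S_I(x))·g_I(x), and suppose z* is a subgradient of φ at some point z. Then D_φ^{z*}(z, x̂) ≤ D_φ^{x*}(x, x̂) + (σ/2)·[ (α² − 2α)·‖F_I(x)‖²/S_I(x) + (2α/S_I(x))·Σ_{i∈I} F_i(x)·(F_i(x) − F_i(x̂) − ⟨∇F_i(x), x − x̂⟩) ]. -/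
open Finset RealInnerProductSpace

/-- One step of the averaging block update with stepsize `α > 0` satisfies
`D_φ^{zs}(z, xhat) ≤ D_φ^{xs}(x, xhat) + (σ/2)·[(α² − 2α)·‖F_I(x)‖²/S_I(x)
  + (2α/S_I(x))·Σ_{i∈I} F_i(x)(F_i(x) − F_i(xhat) − ⟪∇F_i(x), x − xhat⟫)]`. -/
theorem stmt_9 {n : ℕ} {ι : Type*} (I : Finset ι)
    (φ : EuclideanSpace ℝ (Fin n) → ℝ) (σ : ℝ) (hσ : 0 < σ)
    (hsc : ∀ x y xs : EuclideanSpace ℝ (Fin n),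
      (∀ w, φ w ≥ φ x + ⟪xs, w - x⟫) →
        φ y ≥ φ x + ⟪xs, y - x⟫ + σ / 2 * ‖y - x‖ ^ 2)
    (F : ι → EuclideanSpace ℝ (Fin n) → ℝ)
    (F' : ι → EuclideanSpace ℝ (Fin n) → EuclideanSpace ℝ (Fin n))
    (hgrad : ∀ i ∈ I, ∀ x : EuclideanSpace ℝ (Fin n), HasGradientAt (F i) (F' i x) x)
    (xhat : EuclideanSpace ℝ (Fin n)) (hxhat : ∀ i ∈ I, F i xhat = 0)
    (x xs : EuclideanSpace ℝ (Fin n))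
    (hxs : ∀ w, φ w ≥ φ x + ⟪xs, w - x⟫)
    (hS : 0 < ∑ i ∈ I, ‖F' i x‖ ^ 2)
    (α : ℝ) (hα0 : 0 < α)
    (z zs : EuclideanSpace ℝ (Fin n))
    (hzs : zs = xs - (α * σ / ∑ i ∈ I, ‖F' i x‖ ^ 2) • ∑ i ∈ I, F i x • F' i x)
    (hz : ∀ w, φ w ≥ φ z + ⟪zs, w - z⟫) :
    φ xhat - φ z - ⟪zs, xhat - z⟫ ≤
      (φ xhat - φ x - ⟪xs, xhat - x⟫)
        + σ / 2 * ((α ^ 2 - 2 * α) * ((∑ i ∈ I, F i x ^ 2) / ∑ i ∈ I, ‖F' i x‖ ^ 2)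
          + (2 * α / ∑ i ∈ I, ‖F' i x‖ ^ 2)
            * ∑ i ∈ I, F i x * (F i x - F i xhat - ⟪F' i x, x - xhat⟫)) := by
  set S := ∑ i ∈ I, ‖F' i x‖ ^ 2 with hSdef
  set g : EuclideanSpace ℝ (Fin n) := ∑ i ∈ I, F i x • F' i x with hgdef
  set A := ∑ i ∈ I, F i x ^ 2 with hAdef
  set P := ∑ i ∈ I, F i x * ⟪F' i x, x - xhat⟫ with hPdef
  set c := α * σ / S with hcdef
  have h1 := hsc x z xs hxs
  have hinner : ∀ v : EuclideanSpace ℝ (Fin n), ⟪g, v⟫ = ∑ i ∈ I, F i x * ⟪F' i x, v⟫ := by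
    intro v
    rw [hgdef, sum_inner]
    exact Finset.sum_congr rfl fun i _ => real_inner_smul_left _ _ _
  have hzs' : ⟪zs, xhat - z⟫ = ⟪xs, xhat - z⟫ - c * ⟪g, xhat - z⟫ := by
    rw [hzs, inner_sub_left, real_inner_smul_left]
  have hsplit : ⟪g, xhat - z⟫ = ⟪g, xhat - x⟫ + ⟪g, x - z⟫ := by
    rw [← inner_add_right]
    congr 1
    abel
  have hP : ⟪g, xhat - x⟫ = -P := by
    rw [hinner, hPdef, ← Finset.sum_neg_distrib]
    refine Finset.sum_congr rfl fun i _ => ?_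
    have hx : (xhat - x : EuclideanSpace ℝ (Fin n)) = -(x - xhat) := by abel
    rw [hx, inner_neg_right]
    ring
  have hxsz : ⟪xs, xhat - z⟫ = ⟪xs, xhat - x⟫ - ⟪xs, z - x⟫ := by
    rw [← inner_sub_right]
    congr 1
    abel
  have hG2 : ‖g‖ ^ 2 ≤ A * S := by
    have hb : ‖g‖ ≤ ∑ i ∈ I, |F i x| * ‖F' i x‖ := by
      calc ‖g‖ ≤ ∑ i ∈ I, ‖F i x • F' i x‖ := norm_sum_le _ _
        _ = ∑ i ∈ I, |F i x| * ‖F' i x‖ := by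
            exact Finset.sum_congr rfl fun i _ => by rw [norm_smul, Real.norm_eq_abs]
    have hcs : (∑ i ∈ I, |F i x| * ‖F' i x‖) ^ 2 ≤
        (∑ i ∈ I, |F i x| ^ 2) * ∑ i ∈ I, ‖F' i x‖ ^ 2 :=
      Finset.sum_mul_sq_le_sq_mul_sq I _ _
    have hA' : (∑ i ∈ I, |F i x| ^ 2) = A := by
      exact Finset.sum_congr rfl fun i _ => sq_abs _
    have hnn : (0:ℝ) ≤ ∑ i ∈ I, |F i x| * ‖F' i x‖ :=
      Finset.sum_nonneg fun i _ => by positivity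
    calc ‖g‖ ^ 2 ≤ (∑ i ∈ I, |F i x| * ‖F' i x‖) ^ 2 := by
          have := pow_le_pow_left₀ (norm_nonneg g) hb 2
          simpa using this
      _ ≤ A * S := by rw [← hA']; exact hcs
  have hc0 : 0 < c := by rw [hcdef]; positivity
  have hY : c * ⟪g, x - z⟫ ≤ σ / 2 * ‖z - x‖ ^ 2 + c ^ 2 / (2 * σ) * ‖g‖ ^ 2 := by
    have hcs : ⟪g, x - z⟫ ≤ ‖g‖ * ‖x - z‖ := real_inner_le_norm _ _
    have hnorm : ‖x - z‖ = ‖z - x‖ := norm_sub_rev _ _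
    have h2 : c * ⟪g, x - z⟫ ≤ c * (‖g‖ * ‖z - x‖) := by
      rw [← hnorm]; exact mul_le_mul_of_nonneg_left hcs hc0.le
    have key : c * (‖g‖ * ‖z - x‖) ≤ σ / 2 * ‖z - x‖ ^ 2 + c ^ 2 / (2 * σ) * ‖g‖ ^ 2 := by
      have h4 : 2 * σ * (c * (‖g‖ * ‖z - x‖)) ≤ σ ^ 2 * ‖z - x‖ ^ 2 + c ^ 2 * ‖g‖ ^ 2 := by
        nlinarith [sq_nonneg (σ * ‖z - x‖ - c * ‖g‖)]
      calc c * (‖g‖ * ‖z - x‖) ≤ (σ ^ 2 * ‖z - x‖ ^ 2 + c ^ 2 * ‖g‖ ^ 2) / (2 * σ) := by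
            rw [le_div_iff₀ (by positivity)]
            linarith
        _ = σ / 2 * ‖z - x‖ ^ 2 + c ^ 2 / (2 * σ) * ‖g‖ ^ 2 := by
            field_simp
    linarith
  have hsum : ∑ i ∈ I, F i x * (F i x - F i xhat - ⟪F' i x, x - xhat⟫) = A - P := by
    rw [hAdef, hPdef, ← Finset.sum_sub_distrib]
    refine Finset.sum_congr rfl fun i hi => ?_
    rw [hxhat i hi]
    ring
  have hfin : c ^ 2 / (2 * σ) * ‖g‖ ^ 2 ≤ σ * α ^ 2 * A / (2 * S) := by
    have h3 := mul_le_mul_of_nonneg_left hG2 (show (0:ℝ) ≤ c ^ 2 / (2 * σ) by positivity)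
    have heq : c ^ 2 / (2 * σ) * (A * S) = σ * α ^ 2 * A / (2 * S) := by
      rw [hcdef]
      field_simp
    linarith
  have hRHS : σ / 2 * ((α ^ 2 - 2 * α) * (A / S) + (2 * α / S) * (A - P)) =
      σ * α ^ 2 * A / (2 * S) - c * P := by
    rw [hcdef]
    field_simp
    ring
  rw [hsum, hRHS, hzs', hsplit, hxsz, hP]
  linarith
end

section
/- Let φ : ℝⁿ → ℝ be σ-strongly convex (σ > 0). Let I be a finite index set, let each F_i (i ∈ I) be differentiable and satisfy the local tangential cone condition with constant η, where 0 ≤ η < 1/2, and let x̂ ∈ ℝⁿ satisfy F_i(x̂) = 0 for all i ∈ I. Let x ∈ ℝⁿ with subgradient x* of φ at x, suppose S_I(x) > 0, let α ∈ (0, 2(1−η)), set z* := x* − (ασ/S_I(x))·g_I(x), and suppose z* is a subgradient of φ at some point z. Then D_φ^{z*}(z, x̂) ≤ D_φ^{x*}(x, x̂) − ((2(1−η)α − α²)σ/(2(1+η)²·S_I(x)))·Σ_{i∈I} ⟨∇F_i(x), x − x̂⟩². -/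
open Finset RealInnerProductSpace

private lemma young_aux (σ t A G ip : ℝ) (hσ : 0 < σ) (ht : 0 < t) (hcs : ip ≤ G * A) :
    t * ip ≤ σ / 2 * A ^ 2 + t ^ 2 * G ^ 2 / (2 * σ) := by
  have h2σ : (0 : ℝ) < 2 * σ := by linarith
  rw [← sub_nonneg]
  have key : 0 ≤ (σ / 2 * A ^ 2 + t ^ 2 * G ^ 2 / (2 * σ) - t * ip) * (2 * σ) := by
    have expand : (σ / 2 * A ^ 2 + t ^ 2 * G ^ 2 / (2 * σ) - t * ip) * (2 * σ)
        = σ ^ 2 * A ^ 2 + t ^ 2 * G ^ 2 - 2 * σ * (t * ip) := by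
      field_simp
    rw [expand]
    nlinarith [sq_nonneg (σ * A - t * G), mul_le_mul_of_nonneg_left hcs ht.le]
  exact nonneg_of_mul_nonneg_right (by linarith [key] : 0 ≤ 2 * σ * (σ / 2 * A ^ 2 + t ^ 2 * G ^ 2 / (2 * σ) - t * ip)) h2σ

set_option maxHeartbeats 2000000 in
/-- One step of the averaging block nonlinear Bregman–Kaczmarz method with
constant stepsize `α ∈ (0, 2(1−η))` satisfies
`D_φ^{zs}(z, xhat) ≤ D_φ^{xs}(x, xhat)
  − ((2(1−η)α − α²)σ/(2(1+η)²·S_I(x)))·Σ_{i∈I} ⟪∇F_i(x), x − xhat⟫²`. -/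
theorem stmt_10 {n : ℕ} {ι : Type*} (I : Finset ι)
    (φ : EuclideanSpace ℝ (Fin n) → ℝ) (σ : ℝ) (hσ : 0 < σ)
    (hsc : ∀ x y xs : EuclideanSpace ℝ (Fin n),
      (∀ w, φ w ≥ φ x + ⟪xs, w - x⟫) →
        φ y ≥ φ x + ⟪xs, y - x⟫ + σ / 2 * ‖y - x‖ ^ 2)
    (F : ι → EuclideanSpace ℝ (Fin n) → ℝ)
    (F' : ι → EuclideanSpace ℝ (Fin n) → EuclideanSpace ℝ (Fin n))
    (η : ℝ) (hη0 : 0 ≤ η) (hη : η < 1 / 2)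
    (hgrad : ∀ i ∈ I, ∀ x : EuclideanSpace ℝ (Fin n), HasGradientAt (F i) (F' i x) x)
    (htcc : ∀ i ∈ I, ∀ x y : EuclideanSpace ℝ (Fin n),
      abs (F i x - F i y - ⟪F' i x, x - y⟫) ≤ η * abs (F i x - F i y))
    (xhat : EuclideanSpace ℝ (Fin n)) (hxhat : ∀ i ∈ I, F i xhat = 0)
    (x xs : EuclideanSpace ℝ (Fin n))
    (hxs : ∀ w, φ w ≥ φ x + ⟪xs, w - x⟫)
    (hS : 0 < ∑ i ∈ I, ‖F' i x‖ ^ 2)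
    (α : ℝ) (hα0 : 0 < α) (hα2 : α < 2 * (1 - η))
    (z zs : EuclideanSpace ℝ (Fin n))
    (hzs : zs = xs - (α * σ / ∑ i ∈ I, ‖F' i x‖ ^ 2) • ∑ i ∈ I, F i x • F' i x)
    (hz : ∀ w, φ w ≥ φ z + ⟪zs, w - z⟫) :
    φ xhat - φ z - ⟪zs, xhat - z⟫ ≤
      (φ xhat - φ x - ⟪xs, xhat - x⟫)
        - (2 * (1 - η) * α - α ^ 2) * σ
            / (2 * (1 + η) ^ 2 * ∑ i ∈ I, ‖F' i x‖ ^ 2)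
          * ∑ i ∈ I, ⟪F' i x, x - xhat⟫ ^ 2 := by
  set S := ∑ i ∈ I, ‖F' i x‖ ^ 2 with hSdef
  set g := ∑ i ∈ I, F i x • F' i x with hgdef
  set t := α * σ / S with htdef
  set N := ∑ i ∈ I, (F i x) ^ 2 with hNdef
  set P := ∑ i ∈ I, F i x * ⟪F' i x, x - xhat⟫ with hPdef
  set T := ∑ i ∈ I, ⟪F' i x, x - xhat⟫ ^ 2 with hTdef
  have hS0 : S ≠ 0 := ne_of_gt hS
  have ht0 : 0 < t := div_pos (mul_pos hα0 hσ) hS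
  have hN0 : 0 ≤ N := Finset.sum_nonneg fun i _ => sq_nonneg _
  -- per-term consequences of the tangential cone condition
  have hterm : ∀ i ∈ I, (1 - η) * (F i x) ^ 2 ≤ F i x * ⟪F' i x, x - xhat⟫ ∧
      ⟪F' i x, x - xhat⟫ ^ 2 ≤ (1 + η) ^ 2 * (F i x) ^ 2 := by
    intro i hi
    have h := htcc i hi x xhat
    rw [hxhat i hi, sub_zero] at h
    set a := F i x
    set b := (⟪F' i x, x - xhat⟫ : ℝ)
    have h1 : a * (a - b) ≤ η * a ^ 2 := by
      calc a * (a - b) ≤ |a * (a - b)| := le_abs_self _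
        _ = |a| * |a - b| := abs_mul _ _
        _ ≤ |a| * (η * |a|) := mul_le_mul_of_nonneg_left h (abs_nonneg a)
        _ = η * a ^ 2 := by rw [← sq_abs a]; ring
    have h2 : |b| ≤ (1 + η) * |a| := by
      calc |b| = |a - (a - b)| := by ring_nf
        _ ≤ |a| + |a - b| := abs_sub _ _
        _ ≤ |a| + η * |a| := by linarith
        _ = (1 + η) * |a| := by ring
    have h3 : |b| * |b| ≤ ((1 + η) * |a|) * ((1 + η) * |a|) :=
      mul_self_le_mul_self (abs_nonneg b) h2
    constructor
    · nlinarith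
    · nlinarith [sq_abs a, sq_abs b]
  have hP1 : (1 - η) * N ≤ P := by
    rw [hNdef, hPdef, Finset.mul_sum]
    exact Finset.sum_le_sum fun i hi => (hterm i hi).1
  have hT1 : T ≤ (1 + η) ^ 2 * N := by
    rw [hNdef, hTdef, Finset.mul_sum]
    exact Finset.sum_le_sum fun i hi => (hterm i hi).2
  have hT0 : 0 ≤ T := Finset.sum_nonneg fun i _ => sq_nonneg _
  -- inner product of g with x - xhat
  have hgP : ⟪g, x - xhat⟫ = P := by
    rw [hgdef, sum_inner, hPdef]
    exact Finset.sum_congr rfl fun i _ => real_inner_smul_left _ _ _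
  -- Cauchy-Schwarz bound on ‖g‖²
  have hgnorm : ‖g‖ ^ 2 ≤ N * S := by
    have h1 : ‖g‖ ≤ ∑ i ∈ I, |F i x| * ‖F' i x‖ := by
      calc ‖g‖ ≤ ∑ i ∈ I, ‖F i x • F' i x‖ := norm_sum_le _ _
        _ = ∑ i ∈ I, |F i x| * ‖F' i x‖ := by
            exact Finset.sum_congr rfl fun i _ => by
              rw [norm_smul, Real.norm_eq_abs]
    have h2 : (∑ i ∈ I, |F i x| * ‖F' i x‖) ^ 2 ≤
        (∑ i ∈ I, |F i x| ^ 2) * ∑ i ∈ I, ‖F' i x‖ ^ 2 :=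
      Finset.sum_mul_sq_le_sq_mul_sq I _ _
    have h3 : (∑ i ∈ I, |F i x| ^ 2) = N := by
      rw [hNdef]; exact Finset.sum_congr rfl fun i _ => sq_abs _
    have h4 : 0 ≤ ∑ i ∈ I, |F i x| * ‖F' i x‖ :=
      Finset.sum_nonneg fun i _ => mul_nonneg (abs_nonneg _) (norm_nonneg _)
    calc ‖g‖ ^ 2 ≤ (∑ i ∈ I, |F i x| * ‖F' i x‖) ^ 2 := by
          exact pow_le_pow_left₀ (norm_nonneg _) h1 2
      _ ≤ N * S := by rw [← h3]; exact h2
  -- strong convexity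
  have hstrong : φ z ≥ φ x + ⟪xs, z - x⟫ + σ / 2 * ‖z - x‖ ^ 2 := hsc x z xs hxs
  -- Young's inequality step
  have hyoung : t * ⟪g, x - z⟫ ≤ σ / 2 * ‖z - x‖ ^ 2 + t ^ 2 * ‖g‖ ^ 2 / (2 * σ) := by
    have hcs : ⟪g, x - z⟫ ≤ ‖g‖ * ‖z - x‖ := by
      rw [← norm_sub_rev x z]; exact real_inner_le_norm _ _
    exact young_aux σ t (‖z - x‖) (‖g‖) _ hσ ht0 hcs
  -- algebraic identity for the inner products
  have hzsub : ⟪zs, xhat - z⟫ = ⟪xs, xhat - z⟫ - t * ⟪g, xhat - z⟫ := by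
    rw [hzs, inner_sub_left, real_inner_smul_left]
  have hsplit : ⟪g, xhat - z⟫ = -P + ⟪g, x - z⟫ := by
    have : (xhat - z : EuclideanSpace ℝ (Fin n)) = -(x - xhat) + (x - z) := by abel
    rw [this, inner_add_right, inner_neg_right, hgP]
  have hxsid : ⟪xs, xhat - x⟫ - ⟪xs, xhat - z⟫ = ⟪xs, z - x⟫ := by
    rw [← inner_sub_right]
    congr 1
    abel
  -- combine: D_z - D_x ≤ -t*(1-η)*N + t^2*(N*S)/(2σ)
  have hmain : φ xhat - φ z - ⟪zs, xhat - z⟫ - (φ xhat - φ x - ⟪xs, xhat - x⟫) ≤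
      -(t * ((1 - η) * N)) + t ^ 2 * (N * S) / (2 * σ) := by
    have hb1 : t * P ≥ t * ((1 - η) * N) := mul_le_mul_of_nonneg_left hP1 (le_of_lt ht0)
    have hb2 : t ^ 2 * ‖g‖ ^ 2 / (2 * σ) ≤ t ^ 2 * (N * S) / (2 * σ) := by
      apply div_le_div_of_nonneg_right ?_ (by linarith)
      exact mul_le_mul_of_nonneg_left hgnorm (sq_nonneg t)
    have h6 : t * ⟪g, xhat - z⟫ = -(t * P) + t * ⟪g, x - z⟫ := by rw [hsplit]; ring
    linarith [hstrong, hyoung, hb1, hb2, hzsub, hxsid, h6]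
  -- the exact value of the middle bound
  have heq : -(t * ((1 - η) * N)) + t ^ 2 * (N * S) / (2 * σ)
      = -((2 * (1 - η) * α - α ^ 2) * σ / (2 * S) * N) := by
    rw [htdef]
    field_simp
    ring
  -- final comparison with T
  have hC : 0 < (2 * (1 - η) * α - α ^ 2) * σ / (2 * S) := by
    apply div_pos
    · apply mul_pos _ hσ
      nlinarith
    · linarith
  have hfinal : (2 * (1 - η) * α - α ^ 2) * σ / (2 * (1 + η) ^ 2 * S) * T
      ≤ (2 * (1 - η) * α - α ^ 2) * σ / (2 * S) * N := by
    have hηp : (0 : ℝ) < (1 + η) ^ 2 := by positivity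
    have h1 : (2 * (1 - η) * α - α ^ 2) * σ / (2 * (1 + η) ^ 2 * S)
        = (2 * (1 - η) * α - α ^ 2) * σ / (2 * S) / (1 + η) ^ 2 := by
      rw [div_div]; ring_nf
    rw [h1, div_mul_eq_mul_div, div_le_iff₀ hηp]
    calc (2 * (1 - η) * α - α ^ 2) * σ / (2 * S) * T
        ≤ (2 * (1 - η) * α - α ^ 2) * σ / (2 * S) * ((1 + η) ^ 2 * N) :=
          mul_le_mul_of_nonneg_left hT1 (le_of_lt hC)
      _ = (2 * (1 - η) * α - α ^ 2) * σ / (2 * S) * N * (1 + η) ^ 2 := by ring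
  have hmain' := heq ▸ hmain
  linarith [hmain', hfinal]
end

section
/- Let φ : ℝⁿ → ℝ be σ-strongly convex and M-smooth (0 < σ ≤ M). Let I be a finite index set, let each F_i (i ∈ I) be differentiable and satisfy the local tangential cone condition with constant η, where 0 ≤ η < 1/2, and let x̂ ∈ ℝⁿ satisfy F_i(x̂) = 0 for all i ∈ I. Let x ∈ ℝⁿ with subgradient x* of φ at x; suppose S_I(x) > 0 and that there is s > 0 with Σ_{i∈I} ⟨∇F_i(x), d⟩² ≥ s²‖d‖² for all d ∈ ℝⁿ (i.e. the block Jacobian F'_I(x) has smallest singular value at least s). Let α ∈ (0, 2(1−η)), set z* := x* − (ασ/S_I(x))·g_I(x), and suppose z* is a subgradient of φ at some point z. Then D_φ^{z*}(z, x̂) ≤ (1 − (2(1−η)α − α²)·σ·s²/(M·(1+η)²·S_I(x)))·D_φ^{x*}(x, x̂). -/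
open Finset RealInnerProductSpace

lemma aux_comb (S Fn2 G2 ip nd D Dz σ M η α s : ℝ)
    (hS : 0 < S) (hσ : 0 < σ) (hσM : σ ≤ M) (hη0 : 0 ≤ η)
    (hα0 : 0 < α) (hα2 : α < 2*(1-η)) (hs : 0 < s)
    (hA : Dz ≤ D - (α*σ/S)*ip + (α*σ/S)^2/(2*σ)*G2)
    (hB : (1-η)*Fn2 ≤ ip)
    (hC : G2 ≤ Fn2*S)
    (hD : s^2*nd ≤ (1+η)^2*Fn2)
    (hE : D ≤ M/2*nd) :
    Dz ≤ (1 - (2*(1-η)*α - α^2)*σ*s^2/(M*(1+η)^2*S))*D := by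
  have hM : 0 < M := hσ.trans_le hσM
  have h1p : 0 < (1+η)^2 := by positivity
  have hc : 0 < α*σ/S := by positivity
  have hK : 0 < σ*α*(2*(1-η)-α)/(2*S) := by
    have h : 0 < 2*(1-η)-α := by linarith
    positivity
  have step1 : Dz ≤ D - (σ*α*(2*(1-η)-α)/(2*S))*Fn2 := by
    have h1 : (α*σ/S)*((1-η)*Fn2) ≤ (α*σ/S)*ip :=
      mul_le_mul_of_nonneg_left hB hc.le
    have h2 : (α*σ/S)^2/(2*σ)*G2 ≤ (α*σ/S)^2/(2*σ)*(Fn2*S) := by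
      apply mul_le_mul_of_nonneg_left hC; positivity
    have h3 : D - (α*σ/S)*((1-η)*Fn2) + (α*σ/S)^2/(2*σ)*(Fn2*S)
        = D - (σ*α*(2*(1-η)-α)/(2*S))*Fn2 := by
      field_simp; ring
    linarith
  have hFnlb : 2*s^2/(M*(1+η)^2)*D ≤ Fn2 := by
    rw [div_mul_eq_mul_div, div_le_iff₀ (by positivity)]
    nlinarith [mul_le_mul_of_nonneg_left hE (le_of_lt (pow_pos hs 2)),
      mul_le_mul_of_nonneg_left hD hM.le]
  have step2 : D - (σ*α*(2*(1-η)-α)/(2*S))*(2*s^2/(M*(1+η)^2)*D)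
      = (1 - (2*(1-η)*α - α^2)*σ*s^2/(M*(1+η)^2*S))*D := by
    field_simp
  nlinarith [mul_le_mul_of_nonneg_left hFnlb hK.le]

set_option maxHeartbeats 1000000 in
/-- For `φ` σ-strongly convex and M-smooth and a block Jacobian with
smallest singular value at least `s`, one step of the averaging block nonlinear
Bregman–Kaczmarz method with constant stepsize `α ∈ (0, 2(1−η))` contracts:
`D_φ^{zs}(z, xhat) ≤ (1 − (2(1−η)α − α²)σs²/(M(1+η)²S_I(x)))·D_φ^{xs}(x, xhat)`. -/
theorem stmt_11 {n : ℕ} {ι : Type*} (I : Finset ι)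
    (φ : EuclideanSpace ℝ (Fin n) → ℝ) (σ M : ℝ) (hσ : 0 < σ) (hσM : σ ≤ M)
    (hsc : ∀ x y xs : EuclideanSpace ℝ (Fin n),
      (∀ w, φ w ≥ φ x + ⟪xs, w - x⟫) →
        φ y ≥ φ x + ⟪xs, y - x⟫ + σ / 2 * ‖y - x‖ ^ 2)
    (hsm : ∀ x y xs : EuclideanSpace ℝ (Fin n),
      (∀ w, φ w ≥ φ x + ⟪xs, w - x⟫) →
        φ y - φ x - ⟪xs, y - x⟫ ≤ M / 2 * ‖x - y‖ ^ 2)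
    (F : ι → EuclideanSpace ℝ (Fin n) → ℝ)
    (F' : ι → EuclideanSpace ℝ (Fin n) → EuclideanSpace ℝ (Fin n))
    (η : ℝ) (hη0 : 0 ≤ η) (hη : η < 1 / 2)
    (hgrad : ∀ i ∈ I, ∀ x : EuclideanSpace ℝ (Fin n), HasGradientAt (F i) (F' i x) x)
    (htcc : ∀ i ∈ I, ∀ x y : EuclideanSpace ℝ (Fin n),
      abs (F i x - F i y - ⟪F' i x, x - y⟫) ≤ η * abs (F i x - F i y))
    (xhat : EuclideanSpace ℝ (Fin n)) (hxhat : ∀ i ∈ I, F i xhat = 0)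
    (x xs : EuclideanSpace ℝ (Fin n))
    (hxs : ∀ w, φ w ≥ φ x + ⟪xs, w - x⟫)
    (hS : 0 < ∑ i ∈ I, ‖F' i x‖ ^ 2)
    (s : ℝ) (hs : 0 < s)
    (hmin : ∀ d : EuclideanSpace ℝ (Fin n),
      ∑ i ∈ I, ⟪F' i x, d⟫ ^ 2 ≥ s ^ 2 * ‖d‖ ^ 2)
    (α : ℝ) (hα0 : 0 < α) (hα2 : α < 2 * (1 - η))
    (z zs : EuclideanSpace ℝ (Fin n))
    (hzs : zs = xs - (α * σ / ∑ i ∈ I, ‖F' i x‖ ^ 2) • ∑ i ∈ I, F i x • F' i x)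
    (hz : ∀ w, φ w ≥ φ z + ⟪zs, w - z⟫) :
    φ xhat - φ z - ⟪zs, xhat - z⟫ ≤
      (1 - (2 * (1 - η) * α - α ^ 2) * σ * s ^ 2
          / (M * (1 + η) ^ 2 * ∑ i ∈ I, ‖F' i x‖ ^ 2))
        * (φ xhat - φ x - ⟪xs, xhat - x⟫) := by
  set S : ℝ := ∑ i ∈ I, ‖F' i x‖ ^ 2 with hSdef
  set g : EuclideanSpace ℝ (Fin n) := ∑ i ∈ I, F i x • F' i x with hgdef
  set Fn2 : ℝ := ∑ i ∈ I, (F i x) ^ 2 with hFdef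
  set c : ℝ := α * σ / S with hcdef
  have hM : 0 < M := hσ.trans_le hσM
  -- zs - xs = -(c • g)
  have hzx : zs - xs = -(c • g) := by rw [hzs]; abel
  -- per-index tangential cone facts at (x, xhat)
  have htc : ∀ i ∈ I, |F i x - ⟪F' i x, x - xhat⟫| ≤ η * |F i x| := by
    intro i hi
    have h := htcc i hi x xhat
    rwa [hxhat i hi, sub_zero] at h
  -- (B): ⟪g, x - xhat⟫ ≥ (1-η) Fn2
  have hB : (1 - η) * Fn2 ≤ ⟪g, x - xhat⟫ := by
    rw [hgdef, sum_inner, hFdef, Finset.mul_sum]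
    apply Finset.sum_le_sum
    intro i hi
    rw [real_inner_smul_left]
    have h := htc i hi
    have h2 : F i x * (F i x - ⟪F' i x, x - xhat⟫) ≤ |F i x| * (η * |F i x|) := by
      calc F i x * (F i x - ⟪F' i x, x - xhat⟫)
          ≤ |F i x * (F i x - ⟪F' i x, x - xhat⟫)| := le_abs_self _
        _ = |F i x| * |F i x - ⟪F' i x, x - xhat⟫| := abs_mul _ _
        _ ≤ |F i x| * (η * |F i x|) := mul_le_mul_of_nonneg_left h (abs_nonneg _)
    nlinarith [sq_abs (F i x)]
  -- (C): ‖g‖² ≤ Fn2 * S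
  have hC : ‖g‖ ^ 2 ≤ Fn2 * S := by
    have h1 : ‖g‖ ≤ ∑ i ∈ I, |F i x| * ‖F' i x‖ := by
      calc ‖g‖ ≤ ∑ i ∈ I, ‖F i x • F' i x‖ := norm_sum_le _ _
        _ = ∑ i ∈ I, |F i x| * ‖F' i x‖ := by
            simp [norm_smul, Real.norm_eq_abs]
    have h2 : (∑ i ∈ I, |F i x| * ‖F' i x‖) ^ 2
        ≤ (∑ i ∈ I, |F i x| ^ 2) * ∑ i ∈ I, ‖F' i x‖ ^ 2 :=
      Finset.sum_mul_sq_le_sq_mul_sq I _ _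
    have h3 : (∑ i ∈ I, |F i x| ^ 2) = Fn2 := by
      simp [hFdef, sq_abs]
    have h4 : 0 ≤ ∑ i ∈ I, |F i x| * ‖F' i x‖ :=
      Finset.sum_nonneg fun i _ => mul_nonneg (abs_nonneg _) (norm_nonneg _)
    calc ‖g‖ ^ 2 ≤ (∑ i ∈ I, |F i x| * ‖F' i x‖) ^ 2 := by
          apply pow_le_pow_left₀ (norm_nonneg _) h1
      _ ≤ Fn2 * S := by rw [← h3]; exact h2
  -- (D): s² ‖x - xhat‖² ≤ (1+η)² Fn2
  have hD : s ^ 2 * ‖x - xhat‖ ^ 2 ≤ (1 + η) ^ 2 * Fn2 := by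
    have h1 := hmin (x - xhat)
    have h2 : ∑ i ∈ I, ⟪F' i x, x - xhat⟫ ^ 2 ≤ (1 + η) ^ 2 * Fn2 := by
      rw [hFdef, Finset.mul_sum]
      apply Finset.sum_le_sum
      intro i hi
      have h := htc i hi
      have habs : |⟪F' i x, x - xhat⟫| ≤ (1 + η) * |F i x| := by
        have h4 := abs_sub_abs_le_abs_sub ⟪F' i x, x - xhat⟫ (F i x)
        have h5 : |⟪F' i x, x - xhat⟫ - F i x| = |F i x - ⟪F' i x, x - xhat⟫| :=
          abs_sub_comm _ _
        linarith
      nlinarith [sq_abs ⟪F' i x, x - xhat⟫, sq_abs (F i x), abs_nonneg (F i x),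
        abs_nonneg ⟪F' i x, x - xhat⟫]
    linarith
  -- (E)
  have hE := hsm x xhat xs hxs
  -- (A): three-point + strong convexity
  have hstrong := hsc x z xs hxs
  have hAineq : φ xhat - φ z - ⟪zs, xhat - z⟫ ≤
      (φ xhat - φ x - ⟪xs, xhat - x⟫) + ⟪zs - xs, x - xhat⟫ + ‖zs - xs‖ ^ 2 / (2 * σ) := by
    have hCS : ⟪zs - xs, z - x⟫ ≤ ‖zs - xs‖ * ‖z - x‖ := real_inner_le_norm _ _
    have hAM : ‖zs - xs‖ * ‖z - x‖ ≤ ‖zs - xs‖ ^ 2 / (2 * σ) + σ / 2 * ‖z - x‖ ^ 2 := by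
      have h2σ : (0:ℝ) < 2 * σ := by linarith
      rw [div_add' _ _ _ h2σ.ne', le_div_iff₀ h2σ]
      nlinarith [sq_nonneg (‖zs - xs‖ - σ * ‖z - x‖)]
    have e1 : ⟪zs - xs, z - x⟫
        = ⟪zs, z⟫ - ⟪zs, x⟫ - ⟪xs, z⟫ + ⟪xs, x⟫ := by
      simp only [inner_sub_left, inner_sub_right]; ring
    have e2 : ⟪zs - xs, x - xhat⟫
        = ⟪zs, x⟫ - ⟪zs, xhat⟫ - ⟪xs, x⟫ + ⟪xs, xhat⟫ := by
      simp only [inner_sub_left, inner_sub_right]; ring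
    have e3 : ⟪zs, xhat - z⟫ = ⟪zs, xhat⟫ - ⟪zs, z⟫ := by
      simp only [inner_sub_right]
    have e4 : ⟪xs, xhat - x⟫ = ⟪xs, xhat⟫ - ⟪xs, x⟫ := by
      simp only [inner_sub_right]
    have e5 : ⟪xs, z - x⟫ = ⟪xs, z⟫ - ⟪xs, x⟫ := by
      simp only [inner_sub_right]
    rw [e5] at hstrong
    rw [e2, e3, e4]
    linarith [hCS.trans hAM, e1 ▸ (hCS.trans hAM)]
  -- rewrite the update direction
  have hip : ⟪zs - xs, x - xhat⟫ = -(c * ⟪g, x - xhat⟫) := by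
    rw [hzx, inner_neg_left, real_inner_smul_left]
  have hnrm : ‖zs - xs‖ ^ 2 = c ^ 2 * ‖g‖ ^ 2 := by
    rw [hzx, norm_neg, norm_smul]
    simp [Real.norm_eq_abs, mul_pow, sq_abs]
  have hA : φ xhat - φ z - ⟪zs, xhat - z⟫ ≤
      (φ xhat - φ x - ⟪xs, xhat - x⟫) - (α * σ / S) * ⟪g, x - xhat⟫
        + (α * σ / S) ^ 2 / (2 * σ) * ‖g‖ ^ 2 := by
    rw [hip, hnrm] at hAineq
    rw [show c ^ 2 * ‖g‖ ^ 2 / (2 * σ) = c ^ 2 / (2 * σ) * ‖g‖ ^ 2 from by ring] at hAineq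
    rw [← hcdef]
    linarith
  exact aux_comb S Fn2 (‖g‖ ^ 2) ⟪g, x - xhat⟫ (‖x - xhat‖ ^ 2)
    (φ xhat - φ x - ⟪xs, xhat - x⟫) (φ xhat - φ z - ⟪zs, xhat - z⟫)
    σ M η α s hS hσ hσM hη0 hα0 hα2 hs hA hB hC hD hE
end

section
/- Let φ : ℝⁿ → ℝ be σ-strongly convex (σ > 0). Let I be a finite index set, let each F_i (i ∈ I) be differentiable and satisfy the local tangential cone condition with constant η, where 0 ≤ η < 1/2, and let x̂ ∈ ℝⁿ satisfy F_i(x̂) = 0 for all i ∈ I. Let x ∈ ℝⁿ with subgradient x* of φ at x, suppose T := ‖g_I(x)‖² > 0, let δ ∈ (0, 2(1−η)), set z* := x* − δσ·(‖F_I(x)‖²/T)·g_I(x) (the averaging block update with adaptive extrapolated stepsize), and suppose z* is a subgradient of φ at some point z. Then D_φ^{z*}(z, x̂) ≤ D_φ^{x*}(x, x̂) − (σ(2(1−η)δ − δ²)/2)·‖F_I(x)‖⁴/T. -/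
open Finset RealInnerProductSpace

/-- Scalar core inequality. -/
lemma stmt_12_scalar (σ η δ S G r : ℝ) (hσ : 0 < σ) (hS : 0 ≤ S) (hG : 0 < G)
    (hδ0 : 0 < δ) :
    -σ / 2 * r ^ 2 - (δ * σ * (S / G ^ 2)) * ((1 - η) * S)
        + (δ * σ * (S / G ^ 2)) * (G * r)
      ≤ -(σ * (2 * (1 - η) * δ - δ ^ 2) / 2 * (S ^ 2 / G ^ 2)) := by
  have hG2 : 0 < G ^ 2 := by positivity
  rw [div_mul_eq_mul_div, div_mul_eq_mul_div, mul_div_assoc, ← sub_nonneg]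
  have key : 0 ≤ (σ / 2 * r ^ 2 * G ^ 2 - δ * σ * S * (G * r)
      + δ * σ * S * ((1 - η) * S) - σ * (2 * (1 - η) * δ - δ ^ 2) / 2 * S ^ 2) / G ^ 2 := by
    apply div_nonneg _ hG2.le
    nlinarith [sq_nonneg (r * G - δ * S), mul_pos hσ hG2, sq_nonneg r]
  calc (0:ℝ) ≤ _ := key
    _ = _ := by field_simp; ring

/-- One step of the averaging block nonlinear Bregman–Kaczmarz method with
adaptive (extrapolated) stepsize `δ ∈ (0, 2(1−η))` satisfies
`D_φ^{zs}(z, xhat) ≤ D_φ^{xs}(x, xhat) − (σ(2(1−η)δ − δ²)/2)·‖F_I(x)‖⁴/‖g_I(x)‖²`. -/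
theorem stmt_12 {n : ℕ} {ι : Type*} (I : Finset ι)
    (φ : EuclideanSpace ℝ (Fin n) → ℝ) (σ : ℝ) (hσ : 0 < σ)
    (hsc : ∀ x y xs : EuclideanSpace ℝ (Fin n),
      (∀ w, φ w ≥ φ x + ⟪xs, w - x⟫) →
        φ y ≥ φ x + ⟪xs, y - x⟫ + σ / 2 * ‖y - x‖ ^ 2)
    (F : ι → EuclideanSpace ℝ (Fin n) → ℝ)
    (F' : ι → EuclideanSpace ℝ (Fin n) → EuclideanSpace ℝ (Fin n))
    (η : ℝ) (hη0 : 0 ≤ η) (hη : η < 1 / 2)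
    (hgrad : ∀ i ∈ I, ∀ x : EuclideanSpace ℝ (Fin n), HasGradientAt (F i) (F' i x) x)
    (htcc : ∀ i ∈ I, ∀ x y : EuclideanSpace ℝ (Fin n),
      abs (F i x - F i y - ⟪F' i x, x - y⟫) ≤ η * abs (F i x - F i y))
    (xhat : EuclideanSpace ℝ (Fin n)) (hxhat : ∀ i ∈ I, F i xhat = 0)
    (x xs : EuclideanSpace ℝ (Fin n))
    (hxs : ∀ w, φ w ≥ φ x + ⟪xs, w - x⟫)
    (hT : 0 < ‖∑ i ∈ I, F i x • F' i x‖ ^ 2)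
    (δ : ℝ) (hδ0 : 0 < δ) (hδ2 : δ < 2 * (1 - η))
    (z zs : EuclideanSpace ℝ (Fin n))
    (hzs : zs = xs - (δ * σ * ((∑ i ∈ I, F i x ^ 2) / ‖∑ i ∈ I, F i x • F' i x‖ ^ 2))
        • ∑ i ∈ I, F i x • F' i x)
    (hz : ∀ w, φ w ≥ φ z + ⟪zs, w - z⟫) :
    φ xhat - φ z - ⟪zs, xhat - z⟫ ≤
      (φ xhat - φ x - ⟪xs, xhat - x⟫)
        - σ * (2 * (1 - η) * δ - δ ^ 2) / 2
          * ((∑ i ∈ I, F i x ^ 2) ^ 2 / ‖∑ i ∈ I, F i x • F' i x‖ ^ 2) := by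
  set g := ∑ i ∈ I, F i x • F' i x with hg
  set S := ∑ i ∈ I, F i x ^ 2 with hSdef
  set t := δ * σ * (S / ‖g‖ ^ 2) with htdef
  have hS0 : (0:ℝ) ≤ S := Finset.sum_nonneg fun i _ => sq_nonneg _
  have hGpos : (0:ℝ) < ‖g‖ := by
    by_contra h
    push_neg at h
    have : ‖g‖ = 0 := le_antisymm h (norm_nonneg _)
    rw [this] at hT; simp at hT
  -- tangential cone estimate summed up
  have hkey : (1 - η) * S ≤ ⟪g, x - xhat⟫ := by
    have hterm : ∀ i ∈ I, (1 - η) * F i x ^ 2 ≤ F i x * ⟪F' i x, x - xhat⟫ := by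
      intro i hi
      have h1 := htcc i hi x xhat
      rw [hxhat i hi, sub_zero] at h1
      have h3 : F i x * (F i x - ⟪F' i x, x - xhat⟫) ≤ η * F i x ^ 2 := by
        calc F i x * (F i x - ⟪F' i x, x - xhat⟫)
            ≤ |F i x * (F i x - ⟪F' i x, x - xhat⟫)| := le_abs_self _
          _ = |F i x| * |F i x - ⟪F' i x, x - xhat⟫| := abs_mul _ _
          _ ≤ |F i x| * (η * |F i x|) := by
              exact mul_le_mul_of_nonneg_left h1 (abs_nonneg _)
          _ = η * F i x ^ 2 := by rw [← sq_abs]; ring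
      nlinarith
    calc (1 - η) * S = ∑ i ∈ I, (1 - η) * F i x ^ 2 := by rw [hSdef, Finset.mul_sum]
      _ ≤ ∑ i ∈ I, F i x * ⟪F' i x, x - xhat⟫ := Finset.sum_le_sum hterm
      _ = ⟪g, x - xhat⟫ := by
          rw [hg, sum_inner]
          exact Finset.sum_congr rfl fun i _ => (real_inner_smul_left _ _ _).symm
  -- strong convexity at x evaluated at z
  have hstr := hsc x z xs hxs
  -- Cauchy-Schwarz
  have hcs : ⟪g, x - z⟫ ≤ ‖g‖ * ‖x - z‖ := real_inner_le_norm g (x - z)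
  -- expand inner products in the goal
  have hzx : ⟪zs, xhat - z⟫ = ⟪xs, xhat - x⟫ + ⟪xs, x - z⟫
      - t * (-⟪g, x - xhat⟫ + ⟪g, x - z⟫) := by
    rw [hzs, inner_sub_left, real_inner_smul_left]
    have e1 : (xhat - z : EuclideanSpace ℝ (Fin n)) = (xhat - x) + (x - z) := by abel
    rw [e1, inner_add_right, inner_add_right]
    have e2 : ⟪g, xhat - x⟫ = -⟪g, x - xhat⟫ := by
      rw [← inner_neg_right]; congr 1; abel
    rw [e2]
  rw [hzx]
  have hxz : ⟪xs, z - x⟫ = -⟪xs, x - z⟫ := by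
    rw [← inner_neg_right]; congr 1; abel
  rw [hxz, norm_sub_rev] at hstr
  have hmain : -σ / 2 * ‖x - z‖ ^ 2 - t * ((1 - η) * S) + t * (‖g‖ * ‖x - z‖)
      ≤ -(σ * (2 * (1 - η) * δ - δ ^ 2) / 2 * (S ^ 2 / ‖g‖ ^ 2)) :=
    stmt_12_scalar σ η δ S ‖g‖ ‖x - z‖ hσ hS0 hGpos hδ0
  have ht0 : 0 ≤ t := by
    rw [htdef]; positivity
  have h4 : t * ⟪g, x - z⟫ ≤ t * (‖g‖ * ‖x - z‖) := mul_le_mul_of_nonneg_left hcs ht0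
  have h5 : t * ((1 - η) * S) ≤ t * ⟪g, x - xhat⟫ := mul_le_mul_of_nonneg_left hkey ht0
  nlinarith [hstr, hmain, h4, h5]
end

section
/- Let φ : ℝⁿ → ℝ be σ-strongly convex (σ > 0). Let I be a finite index set, let each F_i (i ∈ I) be differentiable and satisfy the local tangential cone condition with constant η, whereceiling 0 ≤ η < 1/2, and let x̂ ∈ ℝⁿ satisfy F_i(x̂) = 0 for all i ∈ I. Let x ∈ ℝⁿ with subgradient x* of φ at x; suppose T := ‖g_I(x)‖² > 0 and that s_max > 0 satisfies T ≤ s_max²·‖F_I(x)‖² (e.g. s_max is the largest singular value of the block Jacobian F'_I(x)). Let δ ∈ (0, 2(1−η)), set z* := x* − δσ·(‖F_I(x)‖²/T)·g_I(x), and suppose z* is a subgradient of φ at some point z. Then D_φ^{z*}(z, x̂) ≤ D_φ^{x*}(x, x̂) − (σ(2(1−η)δ − δ²)/2)·‖F_I(x)‖²/s_max². -/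
open Finset RealInnerProductSpace

private lemma stmt_13_key_aux (σ η δ R T smax t : ℝ) (hσ : 0 < σ) (hT : 0 < T)
    (hR0 : 0 < R) (hsmax : 0 < smax) (hTle : T ≤ smax ^ 2 * R)
    (ht : t = δ * σ * (R / T)) (hc : 0 ≤ σ * (2 * (1 - η) * δ - δ ^ 2) / 2) :
    t ^ 2 * T / (2 * σ) - t * ((1 - η) * R) ≤
      -(σ * (2 * (1 - η) * δ - δ ^ 2) / 2 * (R / smax ^ 2)) := by
  have e : t ^ 2 * T / (2 * σ) - t * ((1 - η) * R)
      = -(σ * (2 * (1 - η) * δ - δ ^ 2) / 2 * (R ^ 2 / T)) := by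
    rw [ht]
    field_simp
    ring
  rw [e, neg_le_neg_iff]
  apply mul_le_mul_of_nonneg_left _ hc
  rw [div_le_div_iff₀ (by positivity) hT]
  nlinarith [hTle, hR0]

/-- One step of the averaging block nonlinear Bregman–Kaczmarz method with
adaptive stepsize `δ ∈ (0, 2(1−η))`, where `‖g_I(x)‖² ≤ smax²·‖F_I(x)‖²`, satisfies
`D_φ^{zs}(z, xhat) ≤ D_φ^{xs}(x, xhat) − (σ(2(1−η)δ − δ²)/2)·‖F_I(x)‖²/smax²`. -/
theorem stmt_13 {n : ℕ} {ι : Type*} (I : Finset ι)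
    (φ : EuclideanSpace ℝ (Fin n) → ℝ) (σ : ℝ) (hσ : 0 < σ)
    (hsc : ∀ x y xs : EuclideanSpace ℝ (Fin n),
      (∀ w, φ w ≥ φ x + ⟪xs, w - x⟫) →
        φ y ≥ φ x + ⟪xs, y - x⟫ + σ / 2 * ‖y - x‖ ^ 2)
    (F : ι → EuclideanSpace ℝ (Fin n) → ℝ)
    (F' : ι → EuclideanSpace ℝ (Fin n) → EuclideanSpace ℝ (Fin n))
    (η : ℝ) (hη0 : 0 ≤ η) (hη : η < 1 / 2)
    (hgrad : ∀ i ∈ I, ∀ x : EuclideanSpace ℝ (Fin n), HasGradientAt (F i) (F' i x) x)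
    (htcc : ∀ i ∈ I, ∀ x y : EuclideanSpace ℝ (Fin n),
      abs (F i x - F i y - ⟪F' i x, x - y⟫) ≤ η * abs (F i x - F i y))
    (xhat : EuclideanSpace ℝ (Fin n)) (hxhat : ∀ i ∈ I, F i xhat = 0)
    (x xs : EuclideanSpace ℝ (Fin n))
    (hxs : ∀ w, φ w ≥ φ x + ⟪xs, w - x⟫)
    (hT : 0 < ‖∑ i ∈ I, F i x • F' i x‖ ^ 2)
    (smax : ℝ) (hsmax : 0 < smax)
    (hTle : ‖∑ i ∈ I, F i x • F' i x‖ ^ 2 ≤ smax ^ 2 * ∑ i ∈ I, F i x ^ 2)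
    (δ : ℝ) (hδ0 : 0 < δ) (hδ2 : δ < 2 * (1 - η))
    (z zs : EuclideanSpace ℝ (Fin n))
    (hzs : zs = xs - (δ * σ * ((∑ i ∈ I, F i x ^ 2) / ‖∑ i ∈ I, F i x • F' i x‖ ^ 2))
        • ∑ i ∈ I, F i x • F' i x)
    (hz : ∀ w, φ w ≥ φ z + ⟪zs, w - z⟫) :
    φ xhat - φ z - ⟪zs, xhat - z⟫ ≤
      (φ xhat - φ x - ⟪xs, xhat - x⟫)
        - σ * (2 * (1 - η) * δ - δ ^ 2) / 2
          * ((∑ i ∈ I, F i x ^ 2) / smax ^ 2) := by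
  set g : EuclideanSpace ℝ (Fin n) := ∑ i ∈ I, F i x • F' i x with hg
  set R : ℝ := ∑ i ∈ I, F i x ^ 2 with hR
  set T : ℝ := ‖g‖ ^ 2 with hTdef
  have hR0 : 0 < R := by nlinarith [sq_nonneg smax]
  set t : ℝ := δ * σ * (R / T) with ht
  clear_value t T R g
  have ht0 : 0 < t := by
    rw [ht]; exact mul_pos (mul_pos hδ0 hσ) (div_pos hR0 hT)
  -- tangential cone bound
  have hA : ⟪g, xhat - x⟫ ≤ -((1 - η) * R) := by
    have e1 : ⟪g, xhat - x⟫ = ∑ i ∈ I, F i x * ⟪F' i x, xhat - x⟫ := by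
      rw [hg, sum_inner]
      exact Finset.sum_congr rfl fun i _ => real_inner_smul_left _ _ _
    have e2 : -((1 - η) * R) = ∑ i ∈ I, -((1 - η) * F i x ^ 2) := by
      rw [hR, Finset.mul_sum, ← Finset.sum_neg_distrib]
    rw [e1, e2]
    apply Finset.sum_le_sum
    intro i hi
    set a : ℝ := F i x
    set b : ℝ := ⟪F' i x, x - xhat⟫ with hb
    have habs : |a - b| ≤ η * |a| := by
      have := htcc i hi x xhat
      rwa [hxhat i hi, sub_zero] at this
    have h1 : a * (a - b) ≤ η * a ^ 2 :=
      calc a * (a - b) ≤ |a * (a - b)| := le_abs_self _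
        _ = |a| * |a - b| := abs_mul _ _
        _ ≤ |a| * (η * |a|) := by
            apply mul_le_mul_of_nonneg_left habs (abs_nonneg a)
        _ = η * a ^ 2 := by rw [← sq_abs a]; ring
    have h2 : ⟪F' i x, xhat - x⟫ = -b := by
      rw [hb, ← inner_neg_right, neg_sub]
    rw [h2]
    nlinarith [h1]
  -- strong convexity at x
  have hstrong : φ z ≥ φ x + ⟪xs, z - x⟫ + σ / 2 * ‖z - x‖ ^ 2 := hsc x z xs hxs
  -- Cauchy-Schwarz / Young bound
  have hCS : ⟪g, x - z⟫ ≤ ‖g‖ * ‖x - z‖ := real_inner_le_norm g (x - z)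
  have hq : t * ⟪g, x - z⟫ ≤ t ^ 2 * T / (2 * σ) + σ / 2 * ‖z - x‖ ^ 2 := by
    have hn : ‖x - z‖ = ‖z - x‖ := norm_sub_rev _ _
    rw [hn] at hCS
    have h3 : t * ⟪g, x - z⟫ ≤ t * (‖g‖ * ‖z - x‖) :=
      mul_le_mul_of_nonneg_left hCS ht0.le
    have h4 : t * (‖g‖ * ‖z - x‖) ≤ t ^ 2 * ‖g‖ ^ 2 / (2 * σ) + σ / 2 * ‖z - x‖ ^ 2 := by
      rw [div_add' _ _ _ (by positivity), le_div_iff₀ (by positivity)]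
      nlinarith [sq_nonneg (t * ‖g‖ - σ * ‖z - x‖)]
    rw [hTdef]
    linarith
  -- key arithmetic
  have hc : 0 ≤ σ * (2 * (1 - η) * δ - δ ^ 2) / 2 := by
    have h5 : (0:ℝ) < 2 * (1 - η) - δ := by linarith
    nlinarith [mul_nonneg hσ.le (mul_pos hδ0 h5).le]
  have key : t ^ 2 * T / (2 * σ) - t * ((1 - η) * R) ≤
      -(σ * (2 * (1 - η) * δ - δ ^ 2) / 2 * (R / smax ^ 2)) :=
    stmt_13_key_aux σ η δ R T smax t hσ hT hR0 hsmax hTle ht hc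
  -- inner product decompositions
  have hzsinner : ⟪zs, xhat - z⟫ = ⟪xs, xhat - z⟫ - t * ⟪g, xhat - z⟫ := by
    rw [hzs, inner_sub_left, real_inner_smul_left]
  have d1 : ⟪xs, xhat - z⟫ = ⟪xs, xhat - x⟫ - ⟪xs, z - x⟫ := by
    rw [← inner_sub_right]
    congr 1
    abel
  have d2 : ⟪g, xhat - z⟫ = ⟪g, xhat - x⟫ + ⟪g, x - z⟫ := by
    rw [← inner_add_right]
    congr 1
    abel
  have hAmul : t * ⟪g, xhat - x⟫ ≤ -(t * ((1 - η) * R)) := by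
    have h6 := mul_le_mul_of_nonneg_left hA ht0.le
    rw [mul_neg] at h6
    exact h6
  have hnormpos : (0:ℝ) ≤ σ / 2 * ‖z - x‖ ^ 2 := by positivity
  rw [hzsinner, d1, d2, mul_add]
  linarith [hq, key, hAmul, hstrong]
end

section
/- Let φ : ℝⁿ → ℝ be σ-strongly convex and M-smooth (0 < σ ≤ M). Let I be a finite index set, let each F_i (i ∈ I) be differentiable and satisfy the local tangential cone condition with constant η, where 0 ≤ η < 1/2, and let x̂ ∈ ℝⁿ satisfy F_i(x̂) = 0 for all i ∈ I. Let x ∈ ℝⁿ with subgradient x* of φ at x; suppose T := ‖g_I(x)‖² > 0, that s_max > 0 satisfies T ≤ s_max²·‖F_I(x)‖², and that s > 0 satisfies Σ_{i∈I} ⟨∇F_i(x), d⟩² ≥ s²‖d‖² for all d ∈ ℝⁿ. Let δ ∈ (0, 2(1−η)), set z* := x* − δσ·(‖F_I(x)‖²/T)·g_I(x), and suppose z* is a subgradient of φ at some point z. Then D_φ^{z*}(z, x̂) ≤ (1 − σ(2(1−η)δ − δ²)·s²/(M·(1+η)²·s_max²))·D_φ^{x*}(x, x̂). -/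
open Finset RealInnerProductSpace

set_option maxHeartbeats 1000000 in
/-- For `φ` σ-strongly convex and M-smooth, with
`‖g_I(x)‖² ≤ smax²·‖F_I(x)‖²` and block Jacobian smallest singular value at least `s`,
one step of the averaging block nonlinear Bregman–Kaczmarz method with adaptive
stepsize `δ ∈ (0, 2(1−η))` contracts:
`D_φ^{zs}(z, xhat) ≤ (1 − σ(2(1−η)δ − δ²)s²/(M(1+η)²smax²))·D_φ^{xs}(x, xhat)`. -/
theorem stmt_14 {n : ℕ} {ι : Type*} (I : Finset ι)
    (φ : EuclideanSpace ℝ (Fin n) → ℝ) (σ M : ℝ) (hσ : 0 < σ) (hσM : σ ≤ M)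
    (hsc : ∀ x y xs : EuclideanSpace ℝ (Fin n),
      (∀ w, φ w ≥ φ x + ⟪xs, w - x⟫) →
        φ y ≥ φ x + ⟪xs, y - x⟫ + σ / 2 * ‖y - x‖ ^ 2)
    (hsm : ∀ x y xs : EuclideanSpace ℝ (Fin n),
      (∀ w, φ w ≥ φ x + ⟪xs, w - x⟫) →
        φ y - φ x - ⟪xs, y - x⟫ ≤ M / 2 * ‖x - y‖ ^ 2)
    (F : ι → EuclideanSpace ℝ (Fin n) → ℝ)
    (F' : ι → EuclideanSpace ℝ (Fin n) → EuclideanSpace ℝ (Fin n))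
    (η : ℝ) (hη0 : 0 ≤ η) (hη : η < 1 / 2)
    (hgrad : ∀ i ∈ I, ∀ x : EuclideanSpace ℝ (Fin n), HasGradientAt (F i) (F' i x) x)
    (htcc : ∀ i ∈ I, ∀ x y : EuclideanSpace ℝ (Fin n),
      abs (F i x - F i y - ⟪F' i x, x - y⟫) ≤ η * abs (F i x - F i y))
    (xhat : EuclideanSpace ℝ (Fin n)) (hxhat : ∀ i ∈ I, F i xhat = 0)
    (x xs : EuclideanSpace ℝ (Fin n))
    (hxs : ∀ w, φ w ≥ φ x + ⟪xs, w - x⟫)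
    (hT : 0 < ‖∑ i ∈ I, F i x • F' i x‖ ^ 2)
    (smax : ℝ) (hsmax : 0 < smax)
    (hTle : ‖∑ i ∈ I, F i x • F' i x‖ ^ 2 ≤ smax ^ 2 * ∑ i ∈ I, F i x ^ 2)
    (s : ℝ) (hs : 0 < s)
    (hmin : ∀ d : EuclideanSpace ℝ (Fin n),
      ∑ i ∈ I, ⟪F' i x, d⟫ ^ 2 ≥ s ^ 2 * ‖d‖ ^ 2)
    (δ : ℝ) (hδ0 : 0 < δ) (hδ2 : δ < 2 * (1 - η))
    (z zs : EuclideanSpace ℝ (Fin n))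
    (hzs : zs = xs - (δ * σ * ((∑ i ∈ I, F i x ^ 2) / ‖∑ i ∈ I, F i x • F' i x‖ ^ 2))
        • ∑ i ∈ I, F i x • F' i x)
    (hz : ∀ w, φ w ≥ φ z + ⟪zs, w - z⟫) :
    φ xhat - φ z - ⟪zs, xhat - z⟫ ≤
      (1 - σ * (2 * (1 - η) * δ - δ ^ 2) * s ^ 2 / (M * (1 + η) ^ 2 * smax ^ 2))
        * (φ xhat - φ x - ⟪xs, xhat - x⟫) := by
  set g := ∑ i ∈ I, F i x • F' i x with hgdef
  set R := ∑ i ∈ I, F i x ^ 2 with hRdef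
  set T := ‖g‖ ^ 2 with hTdef
  set t := δ * σ * (R / T) with htdef
  have hM : 0 < M := lt_of_lt_of_le hσ hσM
  have hR0 : 0 ≤ R := Finset.sum_nonneg fun i _ => sq_nonneg _
  have hRpos : 0 < R := by
    rcases lt_or_eq_of_le hR0 with h | h
    · exact h
    · exfalso; rw [← h, mul_zero] at hTle; linarith
  have ht0 : 0 < t := mul_pos (mul_pos hδ0 hσ) (div_pos hRpos hT)
  have h1η : (0:ℝ) < 1 + η := by linarith
  have hcδ : 0 < 2 * (1 - η) * δ - δ ^ 2 := by nlinarith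
  have hxz_sub : xs - zs = t • g := by rw [hzs, sub_sub_cancel]
  -- tangential cone consequence 1 : ⟪g, x - xhat⟫ ≥ (1-η) R
  have hginner : (1 - η) * R ≤ ⟪g, x - xhat⟫ := by
    have hsum : ⟪g, x - xhat⟫ = ∑ i ∈ I, F i x * ⟪F' i x, x - xhat⟫ := by
      rw [hgdef, sum_inner]
      exact Finset.sum_congr rfl fun i _ => real_inner_smul_left _ _ _
    rw [hsum, hRdef, Finset.mul_sum]
    refine Finset.sum_le_sum fun i hi => ?_
    have htc := htcc i hi x xhat
    rw [hxhat i hi, sub_zero] at htc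
    have ha := abs_le.mp htc
    have h3 : F i x * (F i x - ⟪F' i x, x - xhat⟫) ≤ η * F i x ^ 2 := by
      nlinarith [mul_nonneg (sub_nonneg.mpr (le_abs_self (F i x)))
          (by linarith [ha.1] : 0 ≤ η * |F i x| + (F i x - ⟪F' i x, x - xhat⟫)),
        mul_nonneg (by linarith [neg_abs_le (F i x)] : 0 ≤ |F i x| + F i x)
          (by linarith [ha.2] : 0 ≤ η * |F i x| - (F i x - ⟪F' i x, x - xhat⟫)),
        sq_abs (F i x)]
    nlinarith [h3]
  -- tangential cone consequence 2 : ∑ ⟪∇F_i, x - xhat⟫² ≤ (1+η)² R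
  have hsumsq : ∑ i ∈ I, ⟪F' i x, x - xhat⟫ ^ 2 ≤ (1 + η) ^ 2 * R := by
    rw [hRdef, Finset.mul_sum]
    refine Finset.sum_le_sum fun i hi => ?_
    have htc := htcc i hi x xhat
    rw [hxhat i hi, sub_zero] at htc
    have ha := abs_le.mp htc
    have hA : ⟪F' i x, x - xhat⟫ ≤ (1 + η) * |F i x| := by
      have := le_abs_self (F i x); linarith [ha.1]
    have hB : -((1 + η) * |F i x|) ≤ ⟪F' i x, x - xhat⟫ := by
      have := neg_abs_le (F i x); linarith [ha.2]
    calc ⟪F' i x, x - xhat⟫ ^ 2 ≤ ((1 + η) * |F i x|) ^ 2 := sq_le_sq' hB hA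
      _ = (1 + η) ^ 2 * F i x ^ 2 := by rw [mul_pow, sq_abs]
  have hxd : s ^ 2 * ‖x - xhat‖ ^ 2 ≤ (1 + η) ^ 2 * R :=
    le_trans (hmin (x - xhat)) hsumsq
  -- Bregman distance bounds
  have hD0 : 0 ≤ φ xhat - φ x - ⟪xs, xhat - x⟫ := by
    have := hxs xhat; linarith
  have hDle : φ xhat - φ x - ⟪xs, xhat - x⟫ ≤ M / 2 * ‖x - xhat‖ ^ 2 := hsm x xhat xs hxs
  have hDle2 : φ xhat - φ x - ⟪xs, xhat - x⟫ ≤ M * (1 + η) ^ 2 * R / (2 * s ^ 2) := by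
    rw [le_div_iff₀ (by positivity)]
    nlinarith [mul_le_mul_of_nonneg_right hDle (by positivity : (0:ℝ) ≤ 2 * s ^ 2),
      mul_le_mul_of_nonneg_left hxd hM.le]
  have hRT : R / (2 * smax ^ 2) ≤ R ^ 2 / (2 * T) := by
    rw [div_le_div_iff₀ (by positivity) (by positivity)]
    nlinarith [mul_le_mul_of_nonneg_left hTle (by linarith : (0:ℝ) ≤ 2 * R)]
  -- the one-step descent estimate
  have hnorm : ‖zs - xs‖ ^ 2 = t ^ 2 * T := by
    rw [norm_sub_rev, hxz_sub, norm_smul, mul_pow, Real.norm_eq_abs, sq_abs, hTdef]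
  have hL : φ xhat - φ z - ⟪zs, xhat - z⟫ ≤
      (φ xhat - φ x - ⟪xs, xhat - x⟫) + t ^ 2 * T / (2 * σ) - t * ⟪g, x - xhat⟫ := by
    have hzx := hsc x z xs hxs
    have e2 : ⟪xs - zs, xhat - x⟫ = t * ⟪g, xhat - x⟫ := by
      rw [hxz_sub, real_inner_smul_left]
    have hy : ⟪zs - xs, z - x⟫ ≤ t ^ 2 * T / (2 * σ) + σ / 2 * ‖z - x‖ ^ 2 := by
      have h1 : ⟪zs - xs, z - x⟫ ≤ ‖zs - xs‖ * ‖z - x‖ := real_inner_le_norm _ _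
      have h4 : ‖zs - xs‖ * ‖z - x‖ ≤ (t ^ 2 * T + σ ^ 2 * ‖z - x‖ ^ 2) / (2 * σ) := by
        rw [le_div_iff₀ (by positivity : (0:ℝ) < 2 * σ)]
        nlinarith [sq_nonneg (‖zs - xs‖ - σ * ‖z - x‖), hnorm]
      have h5 : (t ^ 2 * T + σ ^ 2 * ‖z - x‖ ^ 2) / (2 * σ)
          = t ^ 2 * T / (2 * σ) + σ / 2 * ‖z - x‖ ^ 2 := by
        field_simp
      linarith [h1, h4]
    simp only [inner_sub_left, inner_sub_right] at hzx e2 hy ⊢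
    linarith [hzx, e2, hy]
  -- algebraic identity for the descent amount
  have hAeq : t * ((1 - η) * R) - t ^ 2 * T / (2 * σ)
      = σ * (2 * (1 - η) * δ - δ ^ 2) * R ^ 2 / (2 * T) := by
    rw [htdef]
    field_simp
  -- key comparison with the contraction factor
  have hc0 : 0 ≤ σ * (2 * (1 - η) * δ - δ ^ 2) * s ^ 2 / (M * (1 + η) ^ 2 * smax ^ 2) := by
    apply div_nonneg _ (by positivity)
    have : 0 ≤ σ * (2 * (1 - η) * δ - δ ^ 2) := mul_nonneg hσ.le hcδ.le
    nlinarith [sq_nonneg s]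
  have hkey : σ * (2 * (1 - η) * δ - δ ^ 2) * s ^ 2 / (M * (1 + η) ^ 2 * smax ^ 2)
        * (φ xhat - φ x - ⟪xs, xhat - x⟫)
      ≤ σ * (2 * (1 - η) * δ - δ ^ 2) * R ^ 2 / (2 * T) := by
    have h1 := mul_le_mul_of_nonneg_left hDle2 hc0
    have h2 : σ * (2 * (1 - η) * δ - δ ^ 2) * s ^ 2 / (M * (1 + η) ^ 2 * smax ^ 2)
        * (M * (1 + η) ^ 2 * R / (2 * s ^ 2))
        = σ * (2 * (1 - η) * δ - δ ^ 2) * (R / (2 * smax ^ 2)) := by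
      field_simp
    have h3 := mul_le_mul_of_nonneg_left hRT (mul_nonneg hσ.le hcδ.le)
    have h4 : σ * (2 * (1 - η) * δ - δ ^ 2) * (R ^ 2 / (2 * T))
        = σ * (2 * (1 - η) * δ - δ ^ 2) * R ^ 2 / (2 * T) := by ring
    linarith [h1, h3]
  have hmul := mul_le_mul_of_nonneg_left hginner ht0.le
  linarith [hL, hkey, hAeq, hmul]
end

section
/- (Geometric convergence of the averaging block nonlinear Bregman–Kaczmarz method with constant stepsize.) Let φ : ℝⁿ → ℝ be σ-strongly convex and M-smooth (0 < σ ≤ M). Let each F_i (i = 1,…,m) be differentiable and satisfy the local tangential cone condition with constant η, where 0 ≤ η < 1/2, and let x̂ ∈ ℝⁿ satisfy F_i(x̂) = 0 for all i. Let α ∈ (0, 2(1−η)). Suppose sequences (x_k), (x_k*) in ℝⁿ and nonempty index sets I_k ⊆ {1,…,m} satisfy: x_k* is a subgradient of φ at x_k for every k; x_{k+1}* = x_k* − (ασ/S_{I_k}(x_k))·g_{I_k}(x_k); and there are constants 0 < s ≤ G such that for every k, S_{I_k}(x_k) ≤ G² and Σ_{i∈I_k} ⟨∇F_i(x_k), d⟩²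 ≥ s²‖d‖² for all d ∈ ℝⁿ (in particular S_{I_k}(x_k) > 0). Then for every k ≥ 0, (σ/2)‖x_k − x̂‖² ≤ D_φ^{x_k*}(x_k, x̂) ≤ (1 − (2(1−η)α − α²)·σ·s²/(M·(1+η)²·G²))^k · D_φ^{x_0*}(x_0, x̂), and the contraction factor lies in [0, 1). -/
open Finset RealInnerProductSpace

set_option maxHeartbeats 1000000 in
/-- Geometric convergence of the averaging block nonlinear
Bregman–Kaczmarz method with constant stepsize `α ∈ (0, 2(1−η))`:
`(σ/2)‖x_k − xhat‖² ≤ D_φ^{x_k*}(x_k, xhat) ≤ ρᵏ · D_φ^{x_0*}(x_0, xhat)` with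
`ρ = 1 − (2(1−η)α − α²)σs²/(M(1+η)²G²) ∈ [0, 1)`. -/
theorem stmt_15 {n m : ℕ}
    (φ : EuclideanSpace ℝ (Fin n) → ℝ) (σ M : ℝ) (hσ : 0 < σ) (hσM : σ ≤ M)
    (hsc : ∀ x y xs : EuclideanSpace ℝ (Fin n),
      (∀ w, φ w ≥ φ x + ⟪xs, w - x⟫) →
        φ y ≥ φ x + ⟪xs, y - x⟫ + σ / 2 * ‖y - x‖ ^ 2)
    (hsm : ∀ x y xs : EuclideanSpace ℝ (Fin n),
      (∀ w, φ w ≥ φ x + ⟪xs, w - x⟫) →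
        φ y - φ x - ⟪xs, y - x⟫ ≤ M / 2 * ‖x - y‖ ^ 2)
    (F : Fin m → EuclideanSpace ℝ (Fin n) → ℝ)
    (F' : Fin m → EuclideanSpace ℝ (Fin n) → EuclideanSpace ℝ (Fin n))
    (η : ℝ) (hη0 : 0 ≤ η) (hη : η < 1 / 2)
    (hgrad : ∀ i, ∀ x : EuclideanSpace ℝ (Fin n), HasGradientAt (F i) (F' i x) x)
    (htcc : ∀ i, ∀ x y : EuclideanSpace ℝ (Fin n),
      abs (F i x - F i y - ⟪F' i x, x - y⟫) ≤ η * abs (F i x - F i y))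
    (xhat : EuclideanSpace ℝ (Fin n)) (hxhat : ∀ i, F i xhat = 0)
    (α : ℝ) (hα0 : 0 < α) (hα2 : α < 2 * (1 - η))
    (x xs : ℕ → EuclideanSpace ℝ (Fin n)) (Ik : ℕ → Finset (Fin m))
    (hIk : ∀ k, (Ik k).Nonempty)
    (hsub : ∀ k, ∀ w, φ w ≥ φ (x k) + ⟪xs k, w - x k⟫)
    (hupd : ∀ k, xs (k + 1) = xs k
      - (α * σ / ∑ i ∈ Ik k, ‖F' i (x k)‖ ^ 2) • ∑ i ∈ Ik k, F i (x k) • F' i (x k))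
    (s G : ℝ) (hs : 0 < s) (hsG : s ≤ G)
    (hSpos : ∀ k, 0 < ∑ i ∈ Ik k, ‖F' i (x k)‖ ^ 2)
    (hSle : ∀ k, ∑ i ∈ Ik k, ‖F' i (x k)‖ ^ 2 ≤ G ^ 2)
    (hmin : ∀ k, ∀ d : EuclideanSpace ℝ (Fin n),
      ∑ i ∈ Ik k, ⟪F' i (x k), d⟫ ^ 2 ≥ s ^ 2 * ‖d‖ ^ 2) :
    (∀ k : ℕ,
      σ / 2 * ‖x k - xhat‖ ^ 2 ≤ φ xhat - φ (x k) - ⟪xs k, xhat - x k⟫ ∧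
      φ xhat - φ (x k) - ⟪xs k, xhat - x k⟫ ≤
        (1 - (2 * (1 - η) * α - α ^ 2) * σ * s ^ 2 / (M * (1 + η) ^ 2 * G ^ 2)) ^ k
          * (φ xhat - φ (x 0) - ⟪xs 0, xhat - x 0⟫)) ∧
    0 ≤ 1 - (2 * (1 - η) * α - α ^ 2) * σ * s ^ 2 / (M * (1 + η) ^ 2 * G ^ 2) ∧
    1 - (2 * (1 - η) * α - α ^ 2) * σ * s ^ 2 / (M * (1 + η) ^ 2 * G ^ 2) < 1 := by

  have hM : 0 < M := lt_of_lt_of_le hσ hσM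
  have hG : 0 < G := lt_of_lt_of_le hs hsG
  have h1η : (0:ℝ) < 1 + η := by linarith
  have hnum : 0 < 2 * (1 - η) * α - α ^ 2 := by nlinarith
  have hden : 0 < M * (1 + η) ^ 2 * G ^ 2 := by positivity
  set ρ : ℝ := 1 - (2 * (1 - η) * α - α ^ 2) * σ * s ^ 2 / (M * (1 + η) ^ 2 * G ^ 2)
    with hρdef
  clear_value ρ
  have hρlt : ρ < 1 := by
    have : 0 < (2 * (1 - η) * α - α ^ 2) * σ * s ^ 2 / (M * (1 + η) ^ 2 * G ^ 2) := by
      positivity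
    simp only [hρdef]; linarith
  have hρ0 : 0 ≤ ρ := by
    have hle : (2 * (1 - η) * α - α ^ 2) * σ * s ^ 2 ≤ M * (1 + η) ^ 2 * G ^ 2 := by
      have h1 : 2 * (1 - η) * α - α ^ 2 ≤ (1 + η) ^ 2 := by nlinarith [sq_nonneg (α - (1 - η))]
      have h3 : s ^ 2 ≤ G ^ 2 := by nlinarith
      have h4 : (2 * (1 - η) * α - α ^ 2) * σ ≤ (1 + η) ^ 2 * M :=
        mul_le_mul h1 hσM hσ.le (by positivity)
      have h5 : (2 * (1 - η) * α - α ^ 2) * σ * s ^ 2 ≤ (1 + η) ^ 2 * M * G ^ 2 :=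
        mul_le_mul h4 h3 (sq_nonneg s) (by positivity)
      nlinarith [h5]
    have : (2 * (1 - η) * α - α ^ 2) * σ * s ^ 2 / (M * (1 + η) ^ 2 * G ^ 2) ≤ 1 :=
      (div_le_one hden).mpr hle
    simp only [hρdef]; linarith
  -- lower bound by strong convexity
  have hlow : ∀ k, σ / 2 * ‖x k - xhat‖ ^ 2 ≤ φ xhat - φ (x k) - ⟪xs k, xhat - x k⟫ := by
    intro k
    have h := hsc (x k) xhat (xs k) (hsub k)
    rw [norm_sub_rev] at h
    linarith
  have hD0 : ∀ k, 0 ≤ φ xhat - φ (x k) - ⟪xs k, xhat - x k⟫ := fun k =>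
    le_trans (by positivity) (hlow k)
  have hDub : ∀ k, φ xhat - φ (x k) - ⟪xs k, xhat - x k⟫ ≤ M / 2 * ‖x k - xhat‖ ^ 2 :=
    fun k => hsm (x k) xhat (xs k) (hsub k)
  -- one-step contraction
  have hstep : ∀ k, φ xhat - φ (x (k+1)) - ⟪xs (k+1), xhat - x (k+1)⟫ ≤
      ρ * (φ xhat - φ (x k) - ⟪xs k, xhat - x k⟫) := by
    intro k
    set S : ℝ := ∑ i ∈ Ik k, ‖F' i (x k)‖ ^ 2 with hSdef
    set g : EuclideanSpace ℝ (Fin n) := ∑ i ∈ Ik k, F i (x k) • F' i (x k) with hgdef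
    set Q : ℝ := ∑ i ∈ Ik k, (F i (x k)) ^ 2 with hQdef
    have hSpos' : 0 < S := hSpos k
    have hSne : S ≠ 0 := ne_of_gt hSpos'
    set t : ℝ := α * σ / S with htdef
    have ht : 0 < t := div_pos (by positivity) hSpos'
    have hts : t * S = α * σ := div_mul_cancel₀ _ hSne
    have hQ0 : 0 ≤ Q := Finset.sum_nonneg fun i _ => sq_nonneg _
    -- per-index tangential cone consequences
    have hmabs : ∀ i, |F i (x k) * (F i (x k) - ⟪F' i (x k), x k - xhat⟫)| ≤
        η * (F i (x k)) ^ 2 := by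
      intro i
      have h := htcc i (x k) xhat
      rw [hxhat i, sub_zero] at h
      calc |F i (x k) * (F i (x k) - ⟪F' i (x k), x k - xhat⟫)|
          = |F i (x k)| * |F i (x k) - ⟪F' i (x k), x k - xhat⟫| := abs_mul _ _
        _ ≤ |F i (x k)| * (η * |F i (x k)|) :=
            mul_le_mul_of_nonneg_left h (abs_nonneg _)
        _ = η * |F i (x k)| ^ 2 := by ring
        _ = η * (F i (x k)) ^ 2 := by rw [sq_abs]
    have htA : ∀ i, (1 - η) * (F i (x k)) ^ 2 ≤ F i (x k) * ⟪F' i (x k), x k - xhat⟫ := by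
      intro i
      have h1 := le_trans (le_abs_self _) (hmabs i)
      nlinarith [h1]
    have htB : ∀ i, ⟪F' i (x k), x k - xhat⟫ ^ 2 ≤ (1 + η) ^ 2 * (F i (x k)) ^ 2 := by
      intro i
      have h := htcc i (x k) xhat
      rw [hxhat i, sub_zero] at h
      have h2 : (F i (x k) - ⟪F' i (x k), x k - xhat⟫) ^ 2 ≤ η ^ 2 * (F i (x k)) ^ 2 := by
        have := pow_le_pow_left₀ (abs_nonneg _) h 2
        rw [sq_abs, mul_pow, sq_abs] at this
        exact this
      have h1 := le_trans (le_abs_self _) (hmabs i)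
      have h1' := le_trans (neg_abs_le _) (neg_le_neg (hmabs i))
      nlinarith [h1, h2, neg_abs_le (F i (x k) * (F i (x k) - ⟪F' i (x k), x k - xhat⟫)),
        hmabs i]
    -- summed versions
    have hA : (1 - η) * Q ≤ ⟪g, x k - xhat⟫ := by
      rw [hgdef, sum_inner, hQdef, Finset.mul_sum]
      exact Finset.sum_le_sum fun i _ => by rw [real_inner_smul_left]; exact htA i
    have hBsum : s ^ 2 * ‖x k - xhat‖ ^ 2 ≤ (1 + η) ^ 2 * Q := by
      have h1 := hmin k (x k - xhat)
      have h2 : ∑ i ∈ Ik k, ⟪F' i (x k), x k - xhat⟫ ^ 2 ≤ (1 + η) ^ 2 * Q := by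
        rw [hQdef, Finset.mul_sum]
        exact Finset.sum_le_sum fun i _ => htB i
      linarith
    have hgnorm : ‖g‖ ^ 2 ≤ Q * S := by
      have h1 : ‖g‖ ≤ ∑ i ∈ Ik k, |F i (x k)| * ‖F' i (x k)‖ := by
        calc ‖g‖ ≤ ∑ i ∈ Ik k, ‖F i (x k) • F' i (x k)‖ := norm_sum_le _ _
          _ = ∑ i ∈ Ik k, |F i (x k)| * ‖F' i (x k)‖ := by
              simp [norm_smul, Real.norm_eq_abs]
      have h2 : (∑ i ∈ Ik k, |F i (x k)| * ‖F' i (x k)‖) ^ 2 ≤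
          (∑ i ∈ Ik k, |F i (x k)| ^ 2) * ∑ i ∈ Ik k, ‖F' i (x k)‖ ^ 2 :=
        Finset.sum_mul_sq_le_sq_mul_sq _ _ _
      have h3 : (∑ i ∈ Ik k, |F i (x k)| ^ 2) = Q := by
        rw [hQdef]; exact Finset.sum_congr rfl fun i _ => sq_abs _
      have h4 : ‖g‖ ^ 2 ≤ (∑ i ∈ Ik k, |F i (x k)| * ‖F' i (x k)‖) ^ 2 := by
        have hnn : (0:ℝ) ≤ ∑ i ∈ Ik k, |F i (x k)| * ‖F' i (x k)‖ :=
          Finset.sum_nonneg fun i _ => mul_nonneg (abs_nonneg _) (norm_nonneg _)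
        nlinarith [norm_nonneg g]
      rw [h3, ← hSdef] at h2
      linarith
    -- three-point identity
    have hrec : φ xhat - φ (x (k+1)) - ⟪xs (k+1), xhat - x (k+1)⟫ =
        (φ xhat - φ (x k) - ⟪xs k, xhat - x k⟫)
        - (φ (x (k+1)) - φ (x k) - ⟪xs k, x (k+1) - x k⟫)
        + t * ⟪g, xhat - x k⟫ + t * ⟪g, x k - x (k+1)⟫ := by
      have e0 : xhat - x (k+1) = (xhat - x k) - (x (k+1) - x k) := by abel
      have e1 : ⟪xs k, xhat - x (k+1)⟫ = ⟪xs k, xhat - x k⟫ - ⟪xs k, x (k+1) - x k⟫ := by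
        rw [e0, inner_sub_right]
      have e0' : xhat - x (k+1) = (xhat - x k) + (x k - x (k+1)) := by abel
      have e2 : ⟪g, xhat - x (k+1)⟫ = ⟪g, xhat - x k⟫ + ⟪g, x k - x (k+1)⟫ := by
        rw [e0', inner_add_right]
      rw [hupd k, inner_sub_left, real_inner_smul_left, ← hSdef, ← hgdef, ← htdef, e1, e2]
      ring
    have hBlow : σ / 2 * ‖x (k+1) - x k‖ ^ 2 ≤
        φ (x (k+1)) - φ (x k) - ⟪xs k, x (k+1) - x k⟫ := by
      have h := hsc (x k) (x (k+1)) (xs k) (hsub k)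
      linarith
    have hCS : ⟪g, x k - x (k+1)⟫ ≤ ‖g‖ * ‖x (k+1) - x k‖ := by
      have h := real_inner_le_norm g (x k - x (k+1))
      rw [norm_sub_rev (x k) (x (k+1))] at h
      exact h
    have hAneg : t * ⟪g, xhat - x k⟫ ≤ -(t * ((1 - η) * Q)) := by
      have e : xhat - x k = -(x k - xhat) := by abel
      rw [e, inner_neg_right]
      have := mul_le_mul_of_nonneg_left hA ht.le
      linarith
    -- Young's inequality step
    have hgt2 : t ^ 2 * ‖g‖ ^ 2 ≤ α * σ * (t * Q) := by
      have h1 : t ^ 2 * ‖g‖ ^ 2 ≤ t ^ 2 * (Q * S) :=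
        mul_le_mul_of_nonneg_left hgnorm (sq_nonneg t)
      have h2 : t ^ 2 * (Q * S) = (t * S) * (t * Q) := by ring
      rw [h2, hts] at h1
      exact h1
    have hq : t * (‖g‖ * ‖x (k+1) - x k‖) ≤
        σ / 2 * ‖x (k+1) - x k‖ ^ 2 + α * (t * Q) / 2 := by
      nlinarith [sq_nonneg (σ * ‖x (k+1) - x k‖ - t * ‖g‖), hgt2, hσ,
        mul_pos hσ hσ]
    have hCSt : t * ⟪g, x k - x (k+1)⟫ ≤ t * (‖g‖ * ‖x (k+1) - x k‖) :=
      mul_le_mul_of_nonneg_left hCS ht.le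
    have hmain : φ xhat - φ (x (k+1)) - ⟪xs (k+1), xhat - x (k+1)⟫ ≤
        (φ xhat - φ (x k) - ⟪xs k, xhat - x k⟫) - (t * Q) * ((2 * (1 - η) - α) / 2) := by
      have : -(t * ((1 - η) * Q)) + α * (t * Q) / 2 = -((t * Q) * ((2 * (1 - η) - α) / 2)) := by
        ring
      linarith [hrec.le, hBlow, hCSt, hAneg, hq, hrec.ge]
    -- lower bound on t * Q in terms of the Bregman distance
    have hQlow : 2 * s ^ 2 * (φ xhat - φ (x k) - ⟪xs k, xhat - x k⟫) ≤
        M * ((1 + η) ^ 2 * Q) := by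
      have h1 := mul_le_mul_of_nonneg_left hBsum hM.le
      have h2 := mul_le_mul_of_nonneg_left (hDub k) (sq_nonneg s)
      nlinarith [h1, h2]
    have htlow : α * σ / G ^ 2 ≤ t := by
      rw [htdef, div_le_div_iff₀ (by positivity) hSpos']
      have := hSle k
      nlinarith [mul_pos hα0 hσ]
    have htQ : (α * σ / G ^ 2) * (2 * s ^ 2 * (φ xhat - φ (x k) - ⟪xs k, xhat - x k⟫)
        / (M * (1 + η) ^ 2)) ≤ t * Q := by
      apply mul_le_mul htlow _ _ ht.le
      · rw [div_le_iff₀ (by positivity)]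
        calc 2 * s ^ 2 * (φ xhat - φ (x k) - ⟪xs k, xhat - x k⟫) ≤
            M * ((1 + η) ^ 2 * Q) := hQlow
          _ = Q * (M * (1 + η) ^ 2) := by ring
      · exact div_nonneg (mul_nonneg (by positivity) (hD0 k)) (by positivity)
    have hid : ((α * σ / G ^ 2) * (2 * s ^ 2 * (φ xhat - φ (x k) - ⟪xs k, xhat - x k⟫)
        / (M * (1 + η) ^ 2))) * ((2 * (1 - η) - α) / 2) =
        (1 - ρ) * (φ xhat - φ (x k) - ⟪xs k, xhat - x k⟫) := by
      rw [hρdef]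
      field_simp
      ring
    have hfin := mul_le_mul_of_nonneg_right htQ (by linarith : (0:ℝ) ≤ (2 * (1 - η) - α) / 2)
    rw [hid] at hfin
    linarith [hmain, hfin]
  refine ⟨fun k => ⟨hlow k, ?_⟩, hρ0, hρlt⟩
  induction k with
  | zero => simp
  | succ k ih =>
    calc φ xhat - φ (x (k+1)) - ⟪xs (k+1), xhat - x (k+1)⟫ ≤
        ρ * (φ xhat - φ (x k) - ⟪xs k, xhat - x k⟫) := hstep k
      _ ≤ ρ * (ρ ^ k * (φ xhat - φ (x 0) - ⟪xs 0, xhat - x 0⟫)) :=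
          mul_le_mul_of_nonneg_left ih hρ0
      _ = ρ ^ (k+1) * (φ xhat - φ (x 0) - ⟪xs 0, xhat - x 0⟫) := by ring
end

section
/- (Geometric convergence of the averaging block nonlinear Bregman–Kaczmarz method with adaptive stepsize.) Let φ : ℝⁿ → ℝ be σ-strongly convex and M-smooth (0 < σ ≤ M). Let each F_i (i = 1,…,m) be differentiable and satisfy the local tangential cone condition with constant η, where 0 ≤ η < 1/2, and let x̂ ∈ ℝⁿ satisfy F_i(x̂) = 0 for all i. Let δ ∈ (0, 2(1−η)). Suppose sequences (x_k), (x_k*) in ℝⁿ and nonempty index sets I_k ⊆ {1,…,m} satisfy: x_k* is a subgradient of φ at x_k for every k; T_k := ‖g_{I_k}(x_k)‖² > 0 and x_{k+1}* = x_k* − δσ·(‖F_{I_k}(x_k)‖²/T_k)·g_{I_k}(x_k); and there are constants 0 < s ≤ s_max such that for every k, T_k ≤ s_max²·‖F_{I_k}(x_k)‖² and Σ_{i∈I_k} ⟨∇F_i(x_k), d⟩² ≥ s²‖d‖² for all d ∈ ℝⁿ. Then for every k ≥ 0, (σ/2)‖x_k − x̂‖² ≤ D_φ^{x_k*}(x_k,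 x̂) ≤ (1 − σ(2(1−η)δ − δ²)·s²/(M·(1+η)²·s_max²))^k · D_φ^{x_0*}(x_0, x̂), and the contraction factor lies in [0, 1). -/
open Finset RealInnerProductSpace

private lemma stmt16_aux (σ M η δ s smax N Dk : ℝ) (hσ : 0 < σ)
    (hnum : 0 < 2 * (1 - η) * δ - δ ^ 2) (hM : 0 < M) (hsmax : 0 < smax)
    (h1η : 0 < 1 + η)
    (h2sD : 2 * s ^ 2 * Dk ≤ M * (1 + η) ^ 2 * N) :
    σ * (2 * (1 - η) * δ - δ ^ 2) * s ^ 2 / (M * (1 + η) ^ 2 * smax ^ 2) * Dk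
      ≤ σ * (2 * (1 - η) * δ - δ ^ 2) / 2 * (N / smax ^ 2) := by
  have hden : (0:ℝ) < M * (1 + η) ^ 2 * smax ^ 2 := by positivity
  have hA : (0:ℝ) ≤ σ * (2 * (1 - η) * δ - δ ^ 2) * smax ^ 2 :=
    mul_nonneg (mul_nonneg hσ.le hnum.le) (sq_nonneg smax)
  have key : σ * (2 * (1 - η) * δ - δ ^ 2) * s ^ 2 * Dk * (2 * smax ^ 2)
      ≤ σ * (2 * (1 - η) * δ - δ ^ 2) * N * (M * (1 + η) ^ 2 * smax ^ 2) := by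
    nlinarith [mul_le_mul_of_nonneg_left h2sD hA]
  calc σ * (2 * (1 - η) * δ - δ ^ 2) * s ^ 2 / (M * (1 + η) ^ 2 * smax ^ 2) * Dk
      = σ * (2 * (1 - η) * δ - δ ^ 2) * s ^ 2 * Dk / (M * (1 + η) ^ 2 * smax ^ 2) := by
        ring
    _ ≤ σ * (2 * (1 - η) * δ - δ ^ 2) * N / (2 * smax ^ 2) := by
        rw [div_le_div_iff₀ hden (by positivity : (0:ℝ) < 2 * smax ^ 2)]
        exact key
    _ = σ * (2 * (1 - η) * δ - δ ^ 2) / 2 * (N / smax ^ 2) := by ring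

private lemma stmt16_aux2 (σ t a b : ℝ) (hσ : 0 < σ) (ht : 0 ≤ t) :
    t * (a * b) - σ / 2 * b ^ 2 ≤ t ^ 2 * a ^ 2 / (2 * σ) := by
  rw [le_div_iff₀ (by positivity : (0:ℝ) < 2 * σ)]
  nlinarith [sq_nonneg (t * a - σ * b)]

set_option maxHeartbeats 1600000 in
/-- Geometric convergence of the averaging block nonlinear
Bregman–Kaczmarz method with adaptive stepsize `δ ∈ (0, 2(1−η))`:
`(σ/2)‖x_k − xhat‖² ≤ D_φ^{x_k*}(x_k, xhat) ≤ ρᵏ · D_φ^{x_0*}(x_0, xhat)` with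
`ρ = 1 − σ(2(1−η)δ − δ²)s²/(M(1+η)²smax²) ∈ [0, 1)`. -/
theorem stmt_16 {n m : ℕ}
    (φ : EuclideanSpace ℝ (Fin n) → ℝ) (σ M : ℝ) (hσ : 0 < σ) (hσM : σ ≤ M)
    (hsc : ∀ x y xs : EuclideanSpace ℝ (Fin n),
      (∀ w, φ w ≥ φ x + ⟪xs, w - x⟫) →
        φ y ≥ φ x + ⟪xs, y - x⟫ + σ / 2 * ‖y - x‖ ^ 2)
    (hsm : ∀ x y xs : EuclideanSpace ℝ (Fin n),
      (∀ w, φ w ≥ φ x + ⟪xs, w - x⟫) →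
        φ y - φ x - ⟪xs, y - x⟫ ≤ M / 2 * ‖x - y‖ ^ 2)
    (F : Fin m → EuclideanSpace ℝ (Fin n) → ℝ)
    (F' : Fin m → EuclideanSpace ℝ (Fin n) → EuclideanSpace ℝ (Fin n))
    (η : ℝ) (hη0 : 0 ≤ η) (hη : η < 1 / 2)
    (hgrad : ∀ i, ∀ x : EuclideanSpace ℝ (Fin n), HasGradientAt (F i) (F' i x) x)
    (htcc : ∀ i, ∀ x y : EuclideanSpace ℝ (Fin n),
      abs (F i x - F i y - ⟪F' i x, x - y⟫) ≤ η * abs (F i x - F i y))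
    (xhat : EuclideanSpace ℝ (Fin n)) (hxhat : ∀ i, F i xhat = 0)
    (δ : ℝ) (hδ0 : 0 < δ) (hδ2 : δ < 2 * (1 - η))
    (x xs : ℕ → EuclideanSpace ℝ (Fin n)) (Ik : ℕ → Finset (Fin m))
    (hIk : ∀ k, (Ik k).Nonempty)
    (hsub : ∀ k, ∀ w, φ w ≥ φ (x k) + ⟪xs k, w - x k⟫)
    (hT : ∀ k, 0 < ‖∑ i ∈ Ik k, F i (x k) • F' i (x k)‖ ^ 2)
    (hupd : ∀ k, xs (k + 1) = xs k
      - (δ * σ * ((∑ i ∈ Ik k, F i (x k) ^ 2)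
            / ‖∑ i ∈ Ik k, F i (x k) • F' i (x k)‖ ^ 2))
        • ∑ i ∈ Ik k, F i (x k) • F' i (x k))
    (s smax : ℝ) (hs : 0 < s) (hssmax : s ≤ smax)
    (hTle : ∀ k, ‖∑ i ∈ Ik k, F i (x k) • F' i (x k)‖ ^ 2
      ≤ smax ^ 2 * ∑ i ∈ Ik k, F i (x k) ^ 2)
    (hmin : ∀ k, ∀ d : EuclideanSpace ℝ (Fin n),
      ∑ i ∈ Ik k, ⟪F' i (x k), d⟫ ^ 2 ≥ s ^ 2 * ‖d‖ ^ 2) :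
    (∀ k : ℕ,
      σ / 2 * ‖x k - xhat‖ ^ 2 ≤ φ xhat - φ (x k) - ⟪xs k, xhat - x k⟫ ∧
      φ xhat - φ (x k) - ⟪xs k, xhat - x k⟫ ≤
        (1 - σ * (2 * (1 - η) * δ - δ ^ 2) * s ^ 2 / (M * (1 + η) ^ 2 * smax ^ 2)) ^ k
          * (φ xhat - φ (x 0) - ⟪xs 0, xhat - x 0⟫)) ∧
    0 ≤ 1 - σ * (2 * (1 - η) * δ - δ ^ 2) * s ^ 2 / (M * (1 + η) ^ 2 * smax ^ 2) ∧
    1 - σ * (2 * (1 - η) * δ - δ ^ 2) * s ^ 2 / (M * (1 + η) ^ 2 * smax ^ 2) < 1 := by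
  have hM : 0 < M := lt_of_lt_of_le hσ hσM
  have hsmax : 0 < smax := lt_of_lt_of_le hs hssmax
  have h1η : (0:ℝ) < 1 + η := by linarith
  have h1η' : (0:ℝ) < 1 - η := by linarith
  have hden : (0:ℝ) < M * (1 + η) ^ 2 * smax ^ 2 := by positivity
  have hnum : (0:ℝ) < 2 * (1 - η) * δ - δ ^ 2 := by nlinarith
  set c : ℝ := σ * (2 * (1 - η) * δ - δ ^ 2) * s ^ 2 / (M * (1 + η) ^ 2 * smax ^ 2)
    with hc_def
  have hc : 0 < c := by positivity
  have hc1 : c ≤ 1 := by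
    rw [hc_def, div_le_one hden]
    have hA1 : 2 * (1 - η) * δ - δ ^ 2 ≤ (1 + η) ^ 2 := by
      nlinarith [sq_nonneg (δ - (1 - η))]
    have h1 : σ * (2 * (1 - η) * δ - δ ^ 2) ≤ M * (1 + η) ^ 2 :=
      mul_le_mul hσM hA1 hnum.le hM.le
    have h2 : s ^ 2 ≤ smax ^ 2 := by nlinarith
    exact mul_le_mul h1 h2 (by positivity) (by positivity)
  -- per-i facts at each k
  have hAi : ∀ k i, (1 - η) * F i (x k) ^ 2 ≤ F i (x k) * ⟪F' i (x k), x k - xhat⟫ := by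
    intro k i
    have h := htcc i (x k) xhat
    rw [hxhat i] at h
    set a := F i (x k)
    set b : ℝ := ⟪F' i (x k), x k - xhat⟫
    have h' : |a - b| ≤ η * |a| := by simpa using h
    have h3 : a * (a - b) ≤ η * a ^ 2 := by
      calc a * (a - b) ≤ |a * (a - b)| := le_abs_self _
        _ = |a| * |a - b| := abs_mul _ _
        _ ≤ |a| * (η * |a|) := mul_le_mul_of_nonneg_left h' (abs_nonneg a)
        _ = η * a ^ 2 := by rw [← sq_abs a]; ring
    nlinarith
  have hBi : ∀ k i, (⟪F' i (x k), x k - xhat⟫ : ℝ) ^ 2 ≤ (1 + η) ^ 2 * F i (x k) ^ 2 := by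
    intro k i
    have h := htcc i (x k) xhat
    rw [hxhat i] at h
    set a := F i (x k)
    set b : ℝ := ⟪F' i (x k), x k - xhat⟫
    have h' : |a - b| ≤ η * |a| := by simpa using h
    have h4 : |b| ≤ (1 + η) * |a| := by
      calc |b| = |a - (a - b)| := by ring_nf
        _ ≤ |a| + |a - b| := abs_sub _ _
        _ ≤ |a| + η * |a| := by linarith
        _ = (1 + η) * |a| := by ring
    nlinarith [mul_self_nonneg (|b|), sq_abs a, sq_abs b, abs_nonneg a, abs_nonneg b,
      mul_self_le_mul_self (abs_nonneg b) h4]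
  -- the Bregman distance
  obtain ⟨D, hD_def⟩ : ∃ D' : ℕ → ℝ,
      D' = fun k => φ xhat - φ (x k) - ⟪xs k, xhat - x k⟫ := ⟨_, rfl⟩
  have hlow : ∀ k, σ / 2 * ‖x k - xhat‖ ^ 2 ≤ D k := by
    intro k
    have h := hsc (x k) xhat (xs k) (hsub k)
    rw [norm_sub_rev (x k) xhat]
    simp only [hD_def]
    linarith
  have hDnonneg : ∀ k, 0 ≤ D k := by
    intro k
    have h1 := hlow k
    have h0 : 0 ≤ σ / 2 * ‖x k - xhat‖ ^ 2 := by positivity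
    exact le_trans h0 h1
  have hDM : ∀ k, D k ≤ M / 2 * ‖x k - xhat‖ ^ 2 := by
    intro k
    have h := hsm (x k) xhat (xs k) (hsub k)
    simp only [hD_def]
    linarith
  -- step inequality
  have hstep : ∀ k, D (k + 1) ≤ (1 - c) * D k := by
    intro k
    obtain ⟨N, hN_def⟩ : ∃ N' : ℝ, N' = ∑ i ∈ Ik k, F i (x k) ^ 2 := ⟨_, rfl⟩
    obtain ⟨g, hg_def⟩ : ∃ g' : EuclideanSpace ℝ (Fin n),
        g' = ∑ i ∈ Ik k, F i (x k) • F' i (x k) := ⟨_, rfl⟩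
    have hTpos : 0 < ‖g‖ ^ 2 := by rw [hg_def]; exact hT k
    have hTleN : ‖g‖ ^ 2 ≤ smax ^ 2 * N := by rw [hg_def, hN_def]; exact hTle k
    have hNpos : 0 < N := by
      have h1 : 0 < smax ^ 2 * N := lt_of_lt_of_le hTpos hTleN
      rcases mul_pos_iff.mp h1 with ⟨_, h⟩ | ⟨h, _⟩
      · exact h
      · exact absurd h (not_lt.mpr (sq_nonneg smax))
    obtain ⟨t, ht_def⟩ : ∃ t' : ℝ, t' = δ * σ * (N / ‖g‖ ^ 2) := ⟨_, rfl⟩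
    have htpos : 0 < t := by rw [ht_def]; positivity
    have hupd' : xs (k + 1) = xs k - t • g := by
      rw [ht_def, hg_def, hN_def]; exact hupd k
    have hA : (1 - η) * N ≤ ⟪g, x k - xhat⟫ := by
      rw [hg_def, sum_inner, hN_def, mul_sum]
      apply Finset.sum_le_sum
      intro i _
      rw [real_inner_smul_left]
      exact hAi k i
    have hB : s ^ 2 * ‖x k - xhat‖ ^ 2 ≤ (1 + η) ^ 2 * N := by
      calc s ^ 2 * ‖x k - xhat‖ ^ 2 ≤ ∑ i ∈ Ik k, ⟪F' i (x k), x k - xhat⟫ ^ 2 :=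
            hmin k (x k - xhat)
        _ ≤ ∑ i ∈ Ik k, (1 + η) ^ 2 * F i (x k) ^ 2 :=
            Finset.sum_le_sum fun i _ => hBi k i
        _ = (1 + η) ^ 2 * N := by rw [hN_def, mul_sum]
    obtain ⟨B, hB_def⟩ : ∃ B' : ℝ,
        B' = φ (x k) - φ (x (k + 1)) - ⟪xs (k + 1), x k - x (k + 1)⟫ := ⟨_, rfl⟩
    -- exact one-step identity
    have hd0 : D (k + 1) = D k + B - t * ⟪g, x k - xhat⟫ := by
      have hflip : (⟪g, xhat - x k⟫ : ℝ) = - ⟪g, x k - xhat⟫ := by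
        rw [← inner_neg_right]; congr 1; abel
      have hinner : (⟪xs (k + 1), xhat - x k⟫ : ℝ)
          = ⟪xs k, xhat - x k⟫ + t * ⟪g, x k - xhat⟫ := by
        rw [hupd', inner_sub_left, real_inner_smul_left, hflip]; ring
      have hsplit : (⟪xs (k + 1), xhat - x (k + 1)⟫ : ℝ)
          = ⟪xs (k + 1), xhat - x k⟫ + ⟪xs (k + 1), x k - x (k + 1)⟫ := by
        rw [← inner_add_right]; congr 1; abel
      simp only [hD_def]
      rw [hB_def, hsplit, hinner]
      ring
    -- bound on B via strong convexity
    have hBle : B ≤ t ^ 2 * ‖g‖ ^ 2 / (2 * σ) := by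
      have hstrong := hsc (x k) (x (k + 1)) (xs k) (hsub k)
      have e3 : (⟪xs (k + 1) - xs k, x (k + 1) - x k⟫ : ℝ)
          = ⟪xs (k + 1), x (k + 1) - x k⟫ - ⟪xs k, x (k + 1) - x k⟫ := by
        rw [inner_sub_left]
      have e4 : (⟪xs (k + 1), x k - x (k + 1)⟫ : ℝ)
          = - ⟪xs (k + 1), x (k + 1) - x k⟫ := by
        rw [← inner_neg_right]; congr 1; abel
      have h1 : B ≤ ⟪xs (k + 1) - xs k, x (k + 1) - x k⟫
          - σ / 2 * ‖x (k + 1) - x k‖ ^ 2 := by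
        rw [hB_def, e3, e4]
        linarith
      have hip : (⟪xs (k + 1) - xs k, x (k + 1) - x k⟫ : ℝ)
          = - (t * ⟪g, x (k + 1) - x k⟫) := by
        have e5 : xs (k + 1) - xs k = -(t • g) := by rw [hupd']; abel
        rw [e5, inner_neg_left, real_inner_smul_left]
      have habs : |(⟪g, x (k + 1) - x k⟫ : ℝ)| ≤ ‖g‖ * ‖x (k + 1) - x k‖ :=
        abs_real_inner_le_norm g _
      have h3 : -⟪g, x (k + 1) - x k⟫ ≤ ‖g‖ * ‖x (k + 1) - x k‖ :=
        (neg_le_abs _).trans habs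
      have h2 : -(t * ⟪g, x (k + 1) - x k⟫) ≤ t * (‖g‖ * ‖x (k + 1) - x k‖) := by
        calc -(t * ⟪g, x (k + 1) - x k⟫) = t * (-⟪g, x (k + 1) - x k⟫) := by ring
          _ ≤ t * (‖g‖ * ‖x (k + 1) - x k‖) := mul_le_mul_of_nonneg_left h3 htpos.le
      have h4 : t * (‖g‖ * ‖x (k + 1) - x k‖) - σ / 2 * ‖x (k + 1) - x k‖ ^ 2
          ≤ t ^ 2 * ‖g‖ ^ 2 / (2 * σ) := stmt16_aux2 σ t ‖g‖ ‖x (k + 1) - x k‖ hσ htpos.le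
      rw [hip] at h1
      linarith only [h1, h2, h4]
    have h2sD : 2 * s ^ 2 * D k ≤ M * (1 + η) ^ 2 * N := by
      linarith only [mul_le_mul_of_nonneg_left (hDM k)
          (le_of_lt (by positivity : (0:ℝ) < s ^ 2)),
        mul_le_mul_of_nonneg_left hB (by positivity : (0:ℝ) ≤ M / 2)]
    have hkey : c * D k ≤ t * ⟪g, x k - xhat⟫ - t ^ 2 * ‖g‖ ^ 2 / (2 * σ) := by
      have step1 : t * ((1 - η) * N) ≤ t * ⟪g, x k - xhat⟫ :=
        mul_le_mul_of_nonneg_left hA htpos.le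
      have e1 : t * ((1 - η) * N) = δ * σ * (1 - η) * (N ^ 2 / ‖g‖ ^ 2) := by
        rw [ht_def]; ring
      have e2 : t ^ 2 * ‖g‖ ^ 2 / (2 * σ) = δ ^ 2 * σ / 2 * (N ^ 2 / ‖g‖ ^ 2) := by
        rw [ht_def]
        field_simp
      have hR : N ^ 2 / (smax ^ 2 * N) ≤ N ^ 2 / ‖g‖ ^ 2 :=
        div_le_div_of_nonneg_left (sq_nonneg N) hTpos hTleN
      have hR2 : N ^ 2 / (smax ^ 2 * N) = N / smax ^ 2 := by
        rw [div_eq_div_iff (ne_of_gt (mul_pos (pow_pos hsmax 2) hNpos))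
          (ne_of_gt (pow_pos hsmax 2))]
        ring
      rw [hR2] at hR
      have hcoef : 0 ≤ δ * σ * (1 - η) - δ ^ 2 * σ / 2 := by
        have h := mul_pos (mul_pos hδ0 hσ) (show (0:ℝ) < (1 - η) - δ / 2 by linarith)
        nlinarith [h]
      have h5 : (δ * σ * (1 - η) - δ ^ 2 * σ / 2) * (N / smax ^ 2)
          ≤ (δ * σ * (1 - η) - δ ^ 2 * σ / 2) * (N ^ 2 / ‖g‖ ^ 2) :=
        mul_le_mul_of_nonneg_left hR hcoef
      have h6 : c * D k ≤ σ * (2 * (1 - η) * δ - δ ^ 2) / 2 * (N / smax ^ 2) := by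
        rw [hc_def]
        exact stmt16_aux σ M η δ s smax N (D k) hσ hnum hM hsmax h1η h2sD
      have e7 : σ * (2 * (1 - η) * δ - δ ^ 2) / 2 * (N / smax ^ 2)
          = (δ * σ * (1 - η) - δ ^ 2 * σ / 2) * (N / smax ^ 2) := by ring
      rw [e7] at h6
      linarith only [step1, e1, e2, h5, h6]
    linarith only [hd0, hBle, hkey]
  -- conclude
  have ek : ∀ j, φ xhat - φ (x j) - ⟪xs j, xhat - x j⟫ = D j := by
    intro j; rw [hD_def]
  refine ⟨fun k => ⟨by rw [ek k]; exact hlow k, ?_⟩, by linarith, by linarith⟩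
  rw [ek k, ek 0]
  induction k with
  | zero => simp
  | succ k ih =>
      calc D (k + 1) ≤ (1 - c) * D k := hstep k
        _ ≤ (1 - c) * ((1 - c) ^ k * D 0) := by
            apply mul_le_mul_of_nonneg_left ih
            linarith
        _ = (1 - c) ^ (k + 1) * D 0 := by ring
end
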